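/- arXiv:2604.02589 — 9 statements merged into one kernel-verified Lean document; each statement's English description precedes it below -/
import Mathlib

section
/- Let G be a Borel graph on a Polish space X (i.e., G is a symmetric irreflexive Borel subset of X × X) and let k be a natural number such that every vertex x ∈ X has at most k neighbors in G. Then G admits a Borel proper (k+1)-coloring, i.e., χ_B(G) ≤ k + 1. -/
open MeasureTheory Set

/-!
The point is that `{x | ∃ y ∈ S, G x y}` is Borel for Borel `S`: it is the projection of a Borel
set whose sections have at most `k` points. Such a projection is Borel by downward induction on
`j`: once the points with more than `j` points in their section form a Borel set, the points with
exactly `j` are the injective projection of the pairs `(x, t)` with `t` the increasing enumeration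
of the section, hence Borel by Lusin–Souslin.

Sending `x` to the index of the first basic open set containing `x` but none of its neighbours
then gives a Borel proper coloring `r : X → ℕ`. Coloring greedily along `r` (each `x` takes the
least color not used by its neighbours `y` with `r y < r x`, of which there are at most `k`) gives
the `(k + 1)`-coloring, whose color classes are Borel by induction on `r`.
-/

theorem Set.exists_strictMono_range_eq_of_encard_eq {Y : Type*} [LinearOrder Y] {S : Set Y}
    {j : ℕ} (hS : S.encard = j) : ∃ t : Fin j → Y, StrictMono t ∧ range t = S := by
  have hfin : S.Finite := finite_of_encard_eq_coe hS
  have hcard : hfin.toFinset.card = j := by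
    rw [hfin.encard_eq_coe_toFinset_card] at hS
    exact_mod_cast hS
  exact ⟨_, (hfin.toFinset.orderEmbOfFin hcard).strictMono, by simp⟩

section SectionCount

variable {X Y : Type*} [MeasurableSpace X] [StandardBorelSpace X]

theorem measurableSet_le_encard_section_of_succ [TopologicalSpace Y] [PolishSpace Y]
    [MeasurableSpace Y] [BorelSpace Y] [LinearOrder Y] [OrderClosedTopology Y]
    {B : Set (X × Y)} (hB : MeasurableSet B) {j : ℕ}
    (hsucc : MeasurableSet {x | ((j + 1 : ℕ) : ℕ∞) ≤ (Prod.mk x ⁻¹' B).encard}) :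
    MeasurableSet {x | (j : ℕ∞) ≤ (Prod.mk x ⁻¹' B).encard} := by
  set N := {x | ((j + 1 : ℕ) : ℕ∞) ≤ (Prod.mk x ⁻¹' B).encard}
  set E : Set (X × (Fin j → Y)) := {p | StrictMono p.2 ∧ (∀ i, (p.1, p.2 i) ∈ B) ∧ p.1 ∉ N}
  have hE : MeasurableSet E := by
    have hmono : MeasurableSet {t : Fin j → Y | StrictMono t} := by
      simp only [StrictMono, ofPred_forall]
      exact .iInter fun a => .iInter fun b => .iInter fun _ =>
        measurableSet_lt (measurable_pi_apply a) (measurable_pi_apply b)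
    refine Measurable.setOf (.and (hmono.mem.comp measurable_snd)
      (.and (.forall fun i => hB.mem.comp ?_) (hsucc.mem.comp measurable_fst).not))
    exact measurable_fst.prodMk ((measurable_pi_apply i).comp measurable_snd)
  have hcard : ∀ t : Fin j → Y, StrictMono t → (range t).encard = j := fun t ht => by
    simp [← image_univ, ht.injective.encard_image]
  have hle : ∀ x ∉ N, (Prod.mk x ⁻¹' B).encard ≤ j := fun x hx => by
    simpa [N, ENat.natCast_add, ENat.lt_natCast_add_one_iff] using hx
  -- Over `x ∉ N`, the only tuple in `E` is the increasing enumeration of the section.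
  have hrange : ∀ p ∈ E, range p.2 = Prod.mk p.1 ⁻¹' B := fun p ⟨ht, htB, hxN⟩ =>
    (finite_range p.2).eq_of_subset_of_encard_le (range_subset_iff.2 htB)
      ((hle p.1 hxN).trans (hcard p.2 ht).ge)
  have hinj : InjOn Prod.fst E := fun p hp q hq h =>
    Prod.ext h ((hp.1.range_inj hq.1).1 (by rw [hrange p hp, hrange q hq, h]))
  have himage : {x | (j : ℕ∞) ≤ (Prod.mk x ⁻¹' B).encard} = N ∪ Prod.fst '' E := by
    ext x
    refine ⟨fun hx => or_iff_not_imp_left.2 fun hxN => ?_, ?_⟩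
    · obtain ⟨t, ht, htS⟩ :=
        exists_strictMono_range_eq_of_encard_eq (le_antisymm (hle x hxN) hx)
      exact ⟨(x, t), ⟨ht, fun i => htS.subset (mem_range_self i), hxN⟩, rfl⟩
    · rintro (hx | ⟨p, hp, rfl⟩)
      · exact (show (j : ℕ∞) ≤ (j + 1 : ℕ) from Nat.cast_le.2 j.le_succ).trans hx
      · simp only [mem_ofPred_eq, ← hrange p hp, hcard p.2 hp.1, le_refl]
  rw [himage]
  exact hsucc.union (hE.image_of_measurable_injOn measurable_fst hinj)

theorem measurableSet_le_encard_section [TopologicalSpace Y] [PolishSpace Y]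
    [MeasurableSpace Y] [BorelSpace Y] [LinearOrder Y] [OrderClosedTopology Y]
    {B : Set (X × Y)} (hB : MeasurableSet B) {k : ℕ}
    (hk : ∀ x, (Prod.mk x ⁻¹' B).encard ≤ k) (j : ℕ) :
    MeasurableSet {x | (j : ℕ∞) ≤ (Prod.mk x ⁻¹' B).encard} := by
  induction hd : k + 1 - j generalizing j with
  | zero =>
    convert MeasurableSet.empty
    refine eq_empty_of_forall_notMem fun x hx => ?_
    have := (show (j : ℕ∞) ≤ k from hx.trans (hk x))
    norm_cast at this
    omega
  | succ d ih => exact measurableSet_le_encard_section_of_succ hB (ih (j + 1) (by omega))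

theorem MeasurableSet.image_fst_of_encard_section_le [MeasurableSpace Y] [StandardBorelSpace Y]
    {B : Set (X × Y)} (hB : MeasurableSet B) {k : ℕ}
    (hk : ∀ x, (Prod.mk x ⁻¹' B).encard ≤ k) : MeasurableSet (Prod.fst '' B) := by
  -- Transport `B` into `X × ℝ`, where sections can be listed in increasing order.
  have he := measurableEmbedding_embeddingReal Y
  set B' := Prod.map id (embeddingReal Y) '' B
  have hsection : ∀ x, Prod.mk x ⁻¹' B' = embeddingReal Y '' (Prod.mk x ⁻¹' B) := fun x => by
    ext; simp [B']
  have hfst : Prod.fst '' B = {x | ((1 : ℕ) : ℕ∞) ≤ (Prod.mk x ⁻¹' B').encard} := by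
    ext x
    simp [hsection, he.injective.encard_image, Set.Nonempty]
  rw [hfst]
  refine measurableSet_le_encard_section
    ((MeasurableEmbedding.id.prodMap he).measurableSet_image.2 hB) (k := k) (fun x => ?_) 1
  rw [hsection, he.injective.encard_image]
  exact hk x

end SectionCount

theorem measurableSet_setOf_exists_adj {X : Type*} [MeasurableSpace X] [StandardBorelSpace X]
    {G : X → X → Prop} (hG : MeasurableSet {p : X × X | G p.1 p.2}) {k : ℕ}
    (hdeg : ∀ x, ∃ s : Finset X, (∀ y, G x y → y ∈ s) ∧ s.card ≤ k)
    {S : Set X} (hS : MeasurableSet S) : MeasurableSet {x | ∃ y ∈ S, G x y} := by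
  have : {x | ∃ y ∈ S, G x y} = Prod.fst '' {p : X × X | G p.1 p.2 ∧ p.2 ∈ S} := by
    ext x; simp [and_comm]
  rw [this]
  refine (hG.inter (measurable_snd hS)).image_fst_of_encard_section_le (k := k) fun x => ?_
  obtain ⟨s, hs, hsk⟩ := hdeg x
  calc (Prod.mk x ⁻¹' {p : X × X | G p.1 p.2 ∧ p.2 ∈ S}).encard
      ≤ (s : Set X).encard := encard_le_encard fun y hy => hs y hy.1
    _ ≤ k := by simpa using hsk

theorem exists_measurable_nat_coloring {X : Type*} [TopologicalSpace X]
    [SecondCountableTopology X] [T1Space X] [MeasurableSpace X] [OpensMeasurableSpace X]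
    {G : X → X → Prop} (hirr : ∀ x, ¬ G x x) (hfin : ∀ x, {y | G x y}.Finite)
    (hG : ∀ S, IsOpen S → MeasurableSet {x | ∃ y ∈ S, G x y}) :
    ∃ r : X → ℕ, Measurable r ∧ ∀ x y, G x y → r x ≠ r y := by
  classical
  obtain ⟨U, hU⟩ := TopologicalSpace.exists_seq_basis X
  have hsep : ∀ x, ∃ n, x ∈ U n ∧ ∀ y, G x y → y ∉ U n := fun x => by
    obtain ⟨_, ⟨n, rfl⟩, hxU, hUsub⟩ :=
      hU.exists_subset_of_mem_open (show x ∈ {y | G x y}ᶜ from hirr x)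
        (hfin x).isClosed.isOpen_compl
    exact ⟨n, hxU, fun y hy hyU => hUsub hyU hy⟩
  refine ⟨fun x => Nat.find (hsep x), measurable_find hsep fun n => ?_, fun x y hxy hr => ?_⟩
  · have : {x | x ∈ U n ∧ ∀ y, G x y → y ∉ U n} = U n \ {x | ∃ y ∈ U n, G x y} := by
      ext x; simp [and_comm]
    rw [this]
    exact (hU.isOpen ⟨n, rfl⟩).measurableSet.diff (hG _ (hU.isOpen ⟨n, rfl⟩))
  · have hrxy : Nat.find (hsep x) = Nat.find (hsep y) := hr
    exact (Nat.find_spec (hsep x)).2 y hxy (hrxy ▸ (Nat.find_spec (hsep y)).1)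

section Greedy

variable {X : Type*} {G : X → X → Prop} {r : X → ℕ} {k : ℕ}

variable (G r k) in
open Classical in
noncomputable def greedyColoring : X → Fin (k + 1) :=
  (measure r).wf.fix fun x rec =>
    if h : ∃ i, ∀ y (hy : r y < r x), G x y → rec y hy ≠ i then Fin.find _ h else 0

open Classical in
theorem greedyColoring_eq (x : X) :
    greedyColoring G r k x =
      if h : ∃ i, ∀ y, r y < r x → G x y → greedyColoring G r k y ≠ i then Fin.find _ h else 0 :=
  (measure r).wf.fix_eq _ x

theorem exists_forall_adj_ne (hdeg : ∀ x, ∃ s : Finset X, (∀ y, G x y → y ∈ s) ∧ s.card ≤ k)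
    (x : X) (c : X → Fin (k + 1)) : ∃ i, ∀ y, G x y → c y ≠ i := by
  classical
  obtain ⟨s, hs, hsk⟩ := hdeg x
  obtain ⟨i, -, hi⟩ := Finset.exists_mem_notMem_of_card_lt_card (s := s.image c) (t := .univ)
    (Finset.card_image_le.trans_lt (by simpa using Nat.lt_succ_of_le hsk))
  exact ⟨i, fun y hy hyi => hi (Finset.mem_image.2 ⟨y, hs y hy, hyi⟩)⟩

theorem greedyColoring_eq_iff (hdeg : ∀ x, ∃ s : Finset X, (∀ y, G x y → y ∈ s) ∧ s.card ≤ k)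
    {x : X} {i : Fin (k + 1)} :
    greedyColoring G r k x = i ↔ (∀ y, r y < r x → G x y → greedyColoring G r k y ≠ i) ∧
      ∀ j < i, ∃ y, r y < r x ∧ G x y ∧ greedyColoring G r k y = j := by
  classical
  obtain ⟨i₀, hi₀⟩ := exists_forall_adj_ne hdeg x (greedyColoring G r k)
  have hfree : ∃ i, ∀ y, r y < r x → G x y → greedyColoring G r k y ≠ i :=
    ⟨i₀, fun y _ hy => hi₀ y hy⟩
  rw [greedyColoring_eq, dif_pos hfree, Fin.find_eq_iff]
  simp only [not_forall, not_not, exists_prop]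

theorem greedyColoring_ne (hdeg : ∀ x, ∃ s : Finset X, (∀ y, G x y → y ∈ s) ∧ s.card ≤ k)
    {x y : X} (hxy : G x y) (hr : r y < r x) : greedyColoring G r k x ≠ greedyColoring G r k y :=
  fun h => ((greedyColoring_eq_iff hdeg).1 h).1 y hr hxy rfl

theorem measurable_greedyColoring [MeasurableSpace X]
    (hdeg : ∀ x, ∃ s : Finset X, (∀ y, G x y → y ∈ s) ∧ s.card ≤ k)
    (hG : ∀ S, MeasurableSet S → MeasurableSet {x | ∃ y ∈ S, G x y}) (hr : Measurable r) :
    Measurable (greedyColoring G r k) := by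
  set c := greedyColoring G r k
  -- The colors on `{r = n}` are determined by the colors on `{r < n}`.
  have hstage : ∀ n i, MeasurableSet {x | r x < n ∧ c x = i} := by
    intro n
    induction n with
    | zero => simp
    | succ n ih =>
      intro i
      have : {x | r x < n + 1 ∧ c x = i} = {x | r x < n ∧ c x = i} ∪ (r ⁻¹' {n} ∩
          ({x | ∃ y ∈ {y | r y < n ∧ c y = i}, G x y}ᶜ ∩
            ⋂ j ∈ Iio i, {x | ∃ y ∈ {y | r y < n ∧ c y = j}, G x y})) := by
        ext x
        rcases lt_trichotomy (r x) n with h | rfl | h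
        · simp [h, h.ne, h.le]
        · simp only [mem_union, mem_inter_iff, mem_ofPred_eq, mem_preimage, mem_singleton_iff,
            mem_compl_iff, mem_iInter, mem_Iio, lt_irrefl, false_and, false_or, true_and,
            Nat.lt_succ_self]
          rw [greedyColoring_eq_iff hdeg]
          simp only [not_exists, not_and, c]
          grind
        · simp [h.ne', h.not_gt, h.not_ge]
      rw [this]
      exact (ih i).union ((hr (measurableSet_singleton n)).inter ((hG _ (ih i)).compl.inter
        (.biInter (to_countable _) fun j _ => hG _ (ih j))))
  refine measurable_to_countable' fun i => ?_
  have : c ⁻¹' {i} = ⋃ n, {x | r x < n ∧ c x = i} := by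
    ext x
    simp only [mem_preimage, mem_singleton_iff, mem_iUnion, mem_ofPred_eq]
    exact ⟨fun h => ⟨r x + 1, Nat.lt_succ_self _, h⟩, fun ⟨_, _, h⟩ => h⟩
  rw [this]
  exact .iUnion fun n => hstage n i

end Greedy

/-- A Borel graph on a Polish space all of whose degrees are at most `k`
admits a Borel proper `(k+1)`-coloring. -/
theorem stmt1 {X : Type} [TopologicalSpace X] [PolishSpace X]
    [MeasurableSpace X] [BorelSpace X]
    (G : X → X → Prop) (hsym : Symmetric G) (hirr : Irreflexive G)
    (hBorel : MeasurableSet {p : X × X | G p.1 p.2}) (k : ℕ)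
    (hdeg : ∀ x, ∃ s : Finset X, (∀ y, G x y → y ∈ s) ∧ s.card ≤ k) :
    ∃ c : X → Fin (k + 1), Measurable c ∧ ∀ x y, G x y → c x ≠ c y := by
  have hG : ∀ S, MeasurableSet S → MeasurableSet {x | ∃ y ∈ S, G x y} :=
    fun S hS => measurableSet_setOf_exists_adj hBorel hdeg hS
  have hfin : ∀ x, {y | G x y}.Finite := fun x =>
    let ⟨s, hs, _⟩ := hdeg x
    s.finite_toSet.subset hs
  obtain ⟨r, hr, hrG⟩ :=
    exists_measurable_nat_coloring hirr hfin fun S hS => hG S hS.measurableSet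
  refine ⟨greedyColoring G r k, measurable_greedyColoring hdeg hG hr, fun x y hxy => ?_⟩
  rcases (hrG x y hxy).lt_or_gt with h | h
  · exact (greedyColoring_ne hdeg (hsym hxy) h).symm
  · exact greedyColoring_ne hdeg hxy h
end

section
/- (First Reflection Theorem) Let X be a Polish space and let Φ be a collection of subsets of X that is Π¹₁ on Σ¹₁. Then for every analytic set A ⊆ X with A ∈ Φ there is a Borel set B ⊆ X with A ⊆ B and B ∈ Φ. -/
/-!
Write `A` as the image of a continuous `f` on Baire space; then `x ∈ A` iff the Souslin tree
`{u | x ∈ closure (f '' N_u)}` of `x` has a branch. For a tree `S` let `M S` be the set of `x`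
such that `S` maps into the Souslin tree of `x` by a length-preserving monotone map. If `S` has
a branch then `M S = A`; if `S` is well founded then `M S ⊇ A` is Borel, by induction along `S`.
The relation `x ∈ M S` is analytic in `(code of S, x)`, so if no Borel superset of `A` were in
`Φ`, the set of codes of well-founded trees would be analytic, say the image of `F`. It is not:
the tree of pairs `(t, g|n)` with `t ∈ codedTree (F g)` would be well founded and receive every
well-founded tree, in particular itself placed below a new root, and iterating that map
produces a branch.
-/

open MeasureTheory Set Filter Topology Descriptive Tree

lemma List.range_prefix_range {j k : ℕ} (h : j ≤ k) : List.range j <+: List.range k := by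
  simpa [List.take_range, h] using List.take_prefix j (List.range k)

namespace Descriptive

variable {α β γ : Type*}

def relabel : (List α → β) → List α → List β
  | _, [] => []
  | g, a :: t => g [a] :: relabel (fun s => g (a :: s)) t

@[simp] lemma length_relabel (g : List α → β) (t : List α) :
    (relabel g t).length = t.length := by
  induction t generalizing g <;> simp [relabel, *]

@[simp] lemma getElem_relabel (g : List α → β) (t : List α) (i : ℕ)
    (h : i < (relabel g t).length) : (relabel g t)[i] = g (t.take (i + 1)) := by
  induction t generalizing g i with
  | nil => simp at h
  | cons a t ih => cases i <;> simp [relabel, ih]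

lemma relabel_relabel (g₁ : List α → β) (g₂ : List β → γ) (t : List α) :
    relabel g₂ (relabel g₁ t) = relabel (fun s => g₂ (relabel g₁ s)) t := by
  induction t generalizing g₁ g₂ with
  | nil => rfl
  | cons a t ih => exact congrArg _ (ih _ _)

lemma relabel_congr {g g' : List α → β} (h : ∀ a s, g (a :: s) = g' (a :: s)) (t : List α) :
    relabel g t = relabel g' t := by
  cases t <;> simp only [relabel, h]

lemma relabel_map_range (g : List α → β) (z : ℕ → α) (k : ℕ) :
    relabel g ((List.range k).map z) =
      (List.range k).map fun i => g ((List.range (i + 1)).map z) := by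
  refine List.ext_getElem (by simp) fun i h _ => ?_
  simp only [getElem_relabel, List.getElem_map, List.getElem_range, ← List.map_take,
    List.take_range]
  simp at h
  rw [Nat.min_eq_left h]

def HasBranch (S : Set (List α)) : Prop := ∃ z : ℕ → α, ∀ k, (List.range k).map z ∈ S

-- The maps `relabel g` are exactly the length-preserving prefix-monotone maps on lists.
def RelabelsInto (S : Set (List α)) (T : Set (List β)) : Prop :=
  ∃ g : List α → β, ∀ t ∈ S, relabel g t ∈ T

section Sets

variable {S : Set (List α)} {T : Set (List β)}

lemma RelabelsInto.trans {U : Set (List γ)} (hST : RelabelsInto S T) (hTU : RelabelsInto T U) :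
    RelabelsInto S U := by
  obtain ⟨g₁, h₁⟩ := hST
  obtain ⟨g₂, h₂⟩ := hTU
  exact ⟨_, fun t ht => relabel_relabel g₁ g₂ t ▸ h₂ _ (h₁ t ht)⟩

lemma RelabelsInto.hasBranch (h : RelabelsInto S T) (hS : HasBranch S) : HasBranch T := by
  obtain ⟨g, hg⟩ := h
  obtain ⟨z, hz⟩ := hS
  exact ⟨_, fun k => relabel_map_range g z k ▸ hg _ (hz k)⟩

lemma HasBranch.relabelsInto (hT : HasBranch T) (S : Set (List α)) : RelabelsInto S T := by
  obtain ⟨z, hz⟩ := hT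
  refine ⟨fun s => z (s.length - 1), fun t _ => ?_⟩
  convert hz t.length using 1
  refine List.ext_getElem (by simp) fun i h _ => ?_
  simp at h
  simp [Nat.min_eq_left h]

lemma relabelsInto_iff_hasBranch (hS : HasBranch S) : RelabelsInto S T ↔ HasBranch T :=
  ⟨fun h => h.hasBranch hS, fun hT => hT.relabelsInto S⟩

lemma relabelsInto_iff_cons [Nonempty β] :
    RelabelsInto S T ↔
      ([] ∈ S → [] ∈ T) ∧ ∀ a, ∃ b, RelabelsInto ((a :: ·) ⁻¹' S) ((b :: ·) ⁻¹' T) := by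
  constructor
  · rintro ⟨g, hg⟩
    exact ⟨hg [], fun a => ⟨g [a], fun s => g (a :: s), fun t ht => hg (a :: t) ht⟩⟩
  · rintro ⟨hnil, h⟩
    choose b g hg using h
    let G : List α → β
      | [] => Classical.arbitrary β -- never evaluated by `relabel`
      | a :: s => if s = [] then b a else g a s
    refine ⟨G, fun t ht => ?_⟩
    cases t with
    | nil => exact hnil ht
    | cons a t =>
      have hG : relabel (fun s => G (a :: s)) t = relabel (g a) t :=
        relabel_congr (fun _ _ => if_neg (List.cons_ne_nil _ _)) t
      simpa [relabel, G, hG] using hg a t ht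

lemma setOf_relabelsInto_eq {X : Type*} [Nonempty β] (S : Set (List α)) (C : List β → Set X) :
    {x | RelabelsInto S {u | x ∈ C u}} =
      {x | [] ∈ S → x ∈ C []} ∩
        ⋂ a, ⋃ b, {x | RelabelsInto ((a :: ·) ⁻¹' S) {u | x ∈ C (b :: u)}} := by
  ext x
  simp only [mem_ofPred_eq, mem_inter_iff, mem_iInter, mem_iUnion]
  exact relabelsInto_iff_cons

end Sets

lemma hasBranch_of_forall_exists_subAt {P : tree α → Prop} {T : tree α} (hT : P T)
    (h : ∀ S, P S → ∃ a, [a] ∈ S ∧ P (subAt S [a])) : HasBranch (T : Set (List α)) := by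
  have : Nonempty α := let ⟨a, _⟩ := h T hT; ⟨a⟩
  choose! a ha hPa using h
  let next : tree α → tree α := fun S => subAt S [a S]
  have hP : ∀ k, P (next^[k] T) := fun k => by
    induction k with
    | zero => exact hT
    | succ k ih => rw [Function.iterate_succ_apply']; exact hPa _ ih
  let z k := a (next^[k] T)
  have hsub : ∀ k, next^[k] T = subAt T ((List.range k).map z) := fun k => by
    induction k with
    | zero => rfl
    | succ k ih =>
      rw [Function.iterate_succ_apply', List.range_succ, List.map_append, ← subAt_append, ← ih]
      rfl
  have hmem : ∀ k, (List.range (k + 1)).map z ∈ T := fun k => by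
    have h : [z k] ∈ next^[k] T := ha _ (hP k)
    rw [hsub k, mem_subAt] at h
    simpa [List.range_succ] using h
  refine ⟨z, fun k => mem_of_prefix ?_ (hmem k)⟩
  rw [List.range_succ, List.map_append]
  exact List.prefix_append _ _

lemma hasBranch_of_relabelsInto_pullSub {T : tree α} (a : α) (hT : [] ∈ T)
    (h : RelabelsInto (pullSub T [a] : Set (List α)) (T : Set (List α))) :
    HasBranch (T : Set (List α)) := by
  refine hasBranch_of_forall_exists_subAt
    (P := fun S => RelabelsInto (pullSub T [a] : Set (List α)) (S : Set (List α))) h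
    fun S ⟨g, hg⟩ => ⟨g [a], ?_, ?_⟩
  · exact hg [a] (mem_pullSub_self.2 hT)
  · refine h.trans ⟨fun s => g (a :: s), fun t ht => hg (a :: t) ?_⟩
    exact mem_pullSub_append (x := [a]).2 ht

lemma HasBranch.of_pullSub {T : tree α} {a : α} (h : HasBranch (pullSub T [a] : Set (List α))) :
    HasBranch (T : Set (List α)) := by
  obtain ⟨z, hz⟩ := h
  refine ⟨fun i => z (i + 1), fun k => ?_⟩
  have := hz (k + 1)
  rw [List.range_succ_eq_map, List.map_cons, List.map_map, SetLike.mem_coe,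
    mem_pullSub_long (by simp)] at this
  obtain ⟨y, hy, hzy⟩ := this
  obtain ⟨-, rfl⟩ := List.cons.inj hzy
  exact hy

lemma measurableSet_setOf_relabelsInto {X : Type*} [MeasurableSpace X] [Countable α]
    [Countable β] [Nonempty β] {S : tree α} (hS : ¬HasBranch (S : Set (List α)))
    {C : List β → Set X} (hC : ∀ u, MeasurableSet (C u)) :
    MeasurableSet {x | RelabelsInto (S : Set (List α)) {u | x ∈ C u}} := by
  -- Non-measurability passes to some child subtree, so it can be followed along a branch.
  by_contra h
  refine hS (hasBranch_of_forall_exists_subAt (P := fun S => ∃ C : List β → Set X,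
      (∀ u, MeasurableSet (C u)) ∧
        ¬MeasurableSet {x | RelabelsInto (S : Set (List α)) {u | x ∈ C u}})
    ⟨C, hC, h⟩ ?_)
  rintro S ⟨C, hC, hS⟩
  by_contra! hsub
  refine hS ?_
  rw [setOf_relabelsInto_eq]
  refine .inter ?_ (.iInter fun a => .iUnion fun b => ?_)
  · by_cases h0 : [] ∈ S <;> simp [h0, hC]
  · by_cases ha : [a] ∈ S
    · exact hsub a ha _ fun u => hC _
    · have hempty : (a :: ·) ⁻¹' (S : Set (List α)) = ∅ :=
        eq_empty_of_forall_notMem fun t ht => ha (singleton_mem S ht)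
      rw [hempty]
      simp [RelabelsInto]

def codedTree (w : List ℕ → ℕ) : tree ℕ :=
  ⟨{t | ∀ s, s <+: t → w s = 0}, fun _ _ ht s hs => ht s (hs.trans (List.prefix_append _ _))⟩

lemma mem_codedTree {w : List ℕ → ℕ} {t : List ℕ} :
    t ∈ codedTree w ↔ ∀ s, s <+: t → w s = 0 :=
  Iff.rfl

lemma exists_codedTree_eq (T : tree ℕ) : ∃ w, codedTree w = T := by
  classical
  refine ⟨fun t => if t ∈ T then 0 else 1, SetLike.ext fun t => ?_⟩
  simp only [mem_codedTree, ite_eq_left_iff, one_ne_zero, imp_false, not_not]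
  exact ⟨fun h => h t List.prefix_rfl, fun h s hs => mem_of_prefix hs h⟩

lemma measurable_relabel_eq [MeasurableSpace β] [MeasurableSingletonClass β] (t : List α)
    (u : List β) : Measurable fun g : List α → β => relabel g t = u := by
  induction t generalizing u with
  | nil => exact measurable_const (a := ([] : List β) = u)
  | cons a t ih =>
    cases u with
    | nil => simp [relabel]
    | cons b u =>
      simp only [relabel, List.cons.injEq]
      refine Measurable.and ?_ ((ih u).comp ?_)
      · exact measurableSet_setOfPred.1
          ((measurable_pi_apply [a] : Measurable fun g : List α → β => g [a])
            (measurableSet_singleton b))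
      · exact measurable_pi_lambda (fun (g : List α → β) s => g (a :: s))
          fun s => measurable_pi_apply _

lemma analyticSet_setOf_relabelsInto {X : Type*} [TopologicalSpace X] [PolishSpace X]
    [MeasurableSpace X] [BorelSpace X] {C : List ℕ → Set X} (hC : ∀ u, MeasurableSet (C u)) :
    AnalyticSet
      {p : (List ℕ → ℕ) × X | RelabelsInto (codedTree p.1 : Set (List ℕ)) {u | p.2 ∈ C u}} := by
  have htree (t : List ℕ) : Measurable fun w : List ℕ → ℕ => t ∈ codedTree w :=
    Measurable.forall fun s => measurable_const.imp <| measurableSet_setOfPred.1 <|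
      (measurable_pi_apply s : Measurable fun w : List ℕ → ℕ => w s) (measurableSet_singleton 0)
  have hlabel (t : List ℕ) : Measurable fun q : X × (List ℕ → ℕ) => q.1 ∈ C (relabel q.2 t) := by
    have : (fun q : X × (List ℕ → ℕ) => q.1 ∈ C (relabel q.2 t)) =
        fun q => ∃ u, relabel q.2 t = u ∧ q.1 ∈ C u := by simp
    rw [this]
    exact Measurable.exists fun u =>
      ((measurable_relabel_eq t u).comp measurable_snd).and ((hC u).mem.comp measurable_fst)
  let D := {q : (List ℕ → ℕ) × X × (List ℕ → ℕ) |
    ∀ t, t ∈ codedTree q.1 → q.2.1 ∈ C (relabel q.2.2 t)}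
  have hD : MeasurableSet D := measurableSet_setOfPred.2 <| Measurable.forall fun t =>
    ((htree t).comp measurable_fst).imp ((hlabel t).comp measurable_snd)
  convert hD.analyticSet.image_of_continuous (continuous_fst.prodMk continuous_snd.fst) using 1
  ext ⟨w, x⟩
  simp [D, RelabelsInto]

-- Nodes are the lists of `Nat.pair (t i) (g i)` with `t ∈ codedTree (F g)`.
def pairTree (F : (ℕ → ℕ) → List ℕ → ℕ) : tree ℕ :=
  ⟨{l | ∃ g, l.map (fun c => c.unpair.2) = (List.range l.length).map g ∧
      l.map (fun c => c.unpair.1) ∈ codedTree (F g)}, by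
    rintro l c ⟨g, hg, hl⟩
    refine ⟨g, ?_, mem_of_prefix ((List.prefix_append l [c]).map _) (by simpa using hl)⟩
    simpa [List.range_succ] using (by simpa [List.range_succ] using hg : _ ∧ _).1⟩

lemma relabelsInto_pairTree (F : (ℕ → ℕ) → List ℕ → ℕ) (g : ℕ → ℕ) :
    RelabelsInto (codedTree (F g) : Set (List ℕ)) (pairTree F : Set (List ℕ)) := by
  let φ (s : List ℕ) := Nat.pair (s.getLastD 0) (g (s.length - 1))
  refine ⟨φ, fun t ht => ?_⟩
  have key : ∀ i (h : i < t.length), (φ (t.take (i + 1))).unpair = (t[i], g i) :=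
    fun i h => by simp [φ, List.getLastD_eq_getLast?, List.getLast?_take, h]
  have hfst : (relabel φ t).map (fun c => c.unpair.1) = t :=
    List.ext_getElem (by simp) fun i h _ => by simp at h; simp [key i h]
  refine ⟨g, List.ext_getElem (by simp) fun i h _ => ?_, by rw [hfst]; exact ht⟩
  simp at h
  simp [key i h]

lemma not_hasBranch_pairTree {F : (ℕ → ℕ) → List ℕ → ℕ} (hF : Continuous F)
    (h : ∀ g, ¬HasBranch (codedTree (F g) : Set (List ℕ))) :
    ¬HasBranch (pairTree F : Set (List ℕ)) := by
  -- The witnesses `gs k` along a branch converge to `g`, so by continuity of `F` the first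
  -- components form a branch of `codedTree (F g)`.
  rintro ⟨ζ, hζ⟩
  choose gs hgs hmem using hζ
  let g i := (ζ i).unpair.2
  let z i := (ζ i).unpair.1
  have hagree : ∀ k, ∀ i < k, gs k i = g i := fun k i hi => by
    have := hgs k
    simp only [List.map_map, List.length_map, List.length_range, List.map_inj_left,
      List.mem_range] at this
    exact (this i hi).symm
  have hlim : Tendsto gs atTop (𝓝 g) := tendsto_pi_nhds.2 fun i =>
    tendsto_atTop_of_eventually_const (i₀ := i + 1) fun k hk => hagree k i hk
  refine h g ⟨z, fun j s hs => ?_⟩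
  have hev := (tendsto_pi_nhds.1 ((hF.tendsto g).comp hlim) s).eventually
    ((isOpen_discrete {F g s}).mem_nhds rfl)
  obtain ⟨k, hk, hjk⟩ := (hev.and (eventually_ge_atTop j)).exists
  have hzk := hmem k
  rw [List.map_map] at hzk
  rw [← hk]
  exact hzk s (hs.trans ((List.range_prefix_range hjk).map z))

theorem not_analyticSet_setOf_not_hasBranch :
    ¬AnalyticSet {w : List ℕ → ℕ | ¬HasBranch (codedTree w : Set (List ℕ))} := by
  -- `codedTree List.length = {[]}`
  have hsingleton : ¬HasBranch (codedTree List.length : Set (List ℕ)) :=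
    fun ⟨z, hz⟩ => by simpa using hz 1 _ List.prefix_rfl
  rw [AnalyticSet]
  rintro (hempty | ⟨F, hF, hrange⟩)
  · exact (eq_empty_iff_forall_notMem.1 hempty) _ hsingleton
  have hWF : ∀ g, ¬HasBranch (codedTree (F g) : Set (List ℕ)) := fun g =>
    hrange.subset (mem_range_self g)
  have hT := not_hasBranch_pairTree hF hWF
  have hnil : [] ∈ pairTree F := by
    obtain ⟨g, hg⟩ := hrange.symm.subset hsingleton
    obtain ⟨φ, hφ⟩ := relabelsInto_pairTree F g
    exact hφ [] (hg ▸ fun s hs => by rw [List.prefix_nil.1 hs]; rfl)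
  -- `pairTree F` placed below a new root
  obtain ⟨w, hw⟩ := exists_codedTree_eq (pullSub (pairTree F) [0])
  obtain ⟨g, rfl⟩ := hrange.symm.subset (show w ∈ {w | _} from fun h => hT (hw ▸ h).of_pullSub)
  exact hT (hasBranch_of_relabelsInto_pullSub 0 hnil (hw ▸ relabelsInto_pairTree F g))

section Souslin

variable {X : Type*} [TopologicalSpace X] (f : (ℕ → ℕ) → X)

def souslinTree (x : X) : Set (List ℕ) :=
  {u | x ∈ closure (f '' {z | (List.range u.length).map z = u})}

lemma hasBranch_souslinTree_apply (z : ℕ → ℕ) : HasBranch (souslinTree f (f z)) :=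
  ⟨z, fun k => subset_closure ⟨z, by simp, rfl⟩⟩

lemma exists_map_range_eq_subset {V : Set (ℕ → ℕ)} {z : ℕ → ℕ} (hV : V ∈ 𝓝 z) :
    ∃ k, {z' | (List.range k).map z' = (List.range k).map z} ⊆ V := by
  obtain ⟨_, ⟨y, k, rfl⟩, hz, hsub⟩ :=
    (PiNat.isTopologicalBasis_cylinders fun _ => ℕ).mem_nhds_iff.1 hV
  refine ⟨k, fun z' hz' => hsub ?_⟩
  rw [← PiNat.mem_cylinder_iff_eq.1 hz, PiNat.mem_cylinder_iff]
  simpa [List.map_inj_left] using hz'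

lemma mem_range_of_hasBranch_souslinTree [T2Space X] {f : (ℕ → ℕ) → X} (hf : Continuous f)
    {x : X} (hx : HasBranch (souslinTree f x)) : x ∈ range f := by
  obtain ⟨z, hz⟩ := hx
  refine ⟨z, by_contra fun hne => ?_⟩
  obtain ⟨V, hV, U, hU, hVU⟩ := Filter.disjoint_iff.1 (disjoint_nhds_nhds.2 hne)
  obtain ⟨k, hk⟩ := exists_map_range_eq_subset (hf.continuousAt.preimage_mem_nhds hV)
  obtain ⟨_, hxU, z', hz', rfl⟩ := mem_closure_iff_nhds.1 (hz k) U hU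
  exact Set.disjoint_left.1 hVU (hk (by simpa using hz')) hxU

lemma hasBranch_souslinTree_iff [T2Space X] {f : (ℕ → ℕ) → X} (hf : Continuous f) {x : X} :
    HasBranch (souslinTree f x) ↔ x ∈ range f :=
  ⟨mem_range_of_hasBranch_souslinTree hf, fun ⟨z, hz⟩ => hz ▸ hasBranch_souslinTree_apply f z⟩

lemma range_subset_setOf_relabelsInto_souslinTree (S : Set (List α)) :
    range f ⊆ {x | RelabelsInto S (souslinTree f x)} := by
  rintro _ ⟨z, rfl⟩
  exact (hasBranch_souslinTree_apply f z).relabelsInto S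

lemma setOf_relabelsInto_souslinTree_of_hasBranch [T2Space X] {f : (ℕ → ℕ) → X}
    (hf : Continuous f) {S : Set (List α)} (hS : HasBranch S) :
    {x | RelabelsInto S (souslinTree f x)} = range f :=
  Set.ext fun _ => (relabelsInto_iff_hasBranch hS).trans (hasBranch_souslinTree_iff hf)

end Souslin

end Descriptive

/-- First Reflection Theorem: if `Φ` is a `Π¹₁ on Σ¹₁` collection of subsets
of a Polish space `X`, then every analytic `A ∈ Φ` has a Borel superset
`B ∈ Φ`. -/
theorem stmt2 {X : Type} [TopologicalSpace X] [PolishSpace X]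
    [MeasurableSpace X] [BorelSpace X]
    (Φ : Set (Set X))
    (hΦ : ∀ (Y : Type) [TopologicalSpace Y] [PolishSpace Y] (A : Set (Y × X)),
      AnalyticSet A → AnalyticSet {y | {x | (y, x) ∈ A} ∈ Φ}ᶜ)
    (A : Set X) (hA : AnalyticSet A) (hAΦ : A ∈ Φ) :
    ∃ B : Set X, MeasurableSet B ∧ A ⊆ B ∧ B ∈ Φ := by
  rw [AnalyticSet] at hA
  obtain rfl | ⟨f, hf, rfl⟩ := hA
  · exact ⟨∅, .empty, subset_rfl, hAΦ⟩
  by_contra! hB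
  let M (w : List ℕ → ℕ) := {x | RelabelsInto (codedTree w : Set (List ℕ)) (souslinTree f x)}
  have hM : {w | M w ∈ Φ}ᶜ = {w | ¬HasBranch (codedTree w : Set (List ℕ))} := by
    ext w
    simp only [mem_compl_iff, mem_ofPred_eq, not_iff_not]
    by_cases hw : HasBranch (codedTree w : Set (List ℕ))
    · have hMw : M w = range f := setOf_relabelsInto_souslinTree_of_hasBranch hf hw
      exact iff_of_true (hMw ▸ hAΦ) hw
    · refine iff_of_false (hB _ ?_ (range_subset_setOf_relabelsInto_souslinTree f _)) hw
      exact measurableSet_setOf_relabelsInto hw fun _ => isClosed_closure.measurableSet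
  refine not_analyticSet_setOf_not_hasBranch ?_
  rw [← hM]
  exact hΦ _ _ (analyticSet_setOf_relabelsInto fun _ => isClosed_closure.measurableSet)
end

section
/- Let G be an analytic graph on a Polish space X and let ℓ be a natural number. Then the collection Φ_ℓ := {A ⊆ X : every odd-length walk in G with both endpoints in A has length at most 2ℓ−1} is Π¹₁ on Σ¹₁. -/
open MeasureTheory

/-- A walk of length `m` in the graph given by the relation `Adj`. -/
def IsWalk {α : Type*} (Adj : α → α → Prop) (m : ℕ) (w : ℕ → α) : Prop :=
  ∀ j, j < m → Adj (w j) (w (j + 1))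

/-- The set of lengths of walks from `u` to `v`. -/
def walkLens {α : Type*} (Adj : α → α → Prop) (u v : α) : Set ℕ :=
  {m | ∃ w : ℕ → α, w 0 = u ∧ w m = v ∧ IsWalk Adj m w}

/-- `Φ(A,k)`: every odd-length walk in `G` with both endpoints in `A`
has length at most `2k - 1`. -/
def PhiProp {X : Type*} (G : X → X → Prop) (A : Set X) (k : ℕ) : Prop :=
  ∀ (m : ℕ) (w : ℕ → X), Odd m → IsWalk G m w → w 0 ∈ A → w m ∈ A → m ≤ 2 * k - 1

/-- For an analytic graph `G` on a Polish space `X` and `ℓ : ℕ`, the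
collection `Φ_ℓ = {A ⊆ X : Φ(A,ℓ)}` is `Π¹₁ on Σ¹₁`. -/
theorem stmt3 {X : Type} [TopologicalSpace X] [PolishSpace X]
    [MeasurableSpace X] [BorelSpace X]
    (G : X → X → Prop) (hsym : Symmetric G) (hirr : Irreflexive G)
    (hana : AnalyticSet {p : X × X | G p.1 p.2}) (ℓ : ℕ) :
    ∀ (Y : Type) [TopologicalSpace Y] [PolishSpace Y] (A : Set (Y × X)),
      AnalyticSet A → AnalyticSet {y | PhiProp G {x | (y, x) ∈ A} ℓ}ᶜ := by
  intro Y _ _ A hA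
  have key : {y | PhiProp G {x | (y, x) ∈ A} ℓ}ᶜ =
      ⋃ m : ℕ, {y | Odd m ∧ ¬ (m ≤ 2 * ℓ - 1) ∧ ∃ x : Fin (m + 1) → X,
        (∀ j : Fin m, G (x j.castSucc) (x j.succ)) ∧ (y, x 0) ∈ A ∧ (y, x (Fin.last m)) ∈ A} := by
    ext y
    simp only [Set.mem_compl_iff, Set.mem_setOf_eq, Set.mem_iUnion, PhiProp]
    push_neg
    constructor
    · rintro ⟨m, w, hodd, hwalk, h0, hm, hgt⟩
      refine ⟨m, hodd, by omega, fun i => w i, fun j => ?_, ?_, ?_⟩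
      · simpa using hwalk j j.2
      · simpa using h0
      · simpa using hm
    · rintro ⟨m, hodd, hgt, x, hx, h0, hm⟩
      refine ⟨m, fun j => x ⟨min j m, by omega⟩, hodd, ?_, ?_, ?_, by omega⟩
      · intro j hj
        convert hx ⟨j, hj⟩ using 2
        · ext; simp [Nat.min_eq_left hj.le]
        · ext; simp [Nat.min_eq_left hj]
      · convert h0 using 3
        ext; simp
      · convert hm using 3
        ext; simp [Fin.last]
  rw [key]
  apply AnalyticSet.iUnion
  intro m
  by_cases hm : Odd m ∧ ¬ (m ≤ 2 * ℓ - 1)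
  · have hm1 : 1 ≤ m := hm.1.pos
    have : {y | Odd m ∧ ¬ (m ≤ 2 * ℓ - 1) ∧ ∃ x : Fin (m + 1) → X,
        (∀ j : Fin m, G (x j.castSucc) (x j.succ)) ∧ (y, x 0) ∈ A ∧ (y, x (Fin.last m)) ∈ A} =
        Prod.fst '' {p : Y × (Fin (m + 1) → X) |
          (∀ j : Fin m, G (p.2 j.castSucc) (p.2 j.succ)) ∧ (p.1, p.2 0) ∈ A ∧
            (p.1, p.2 (Fin.last m)) ∈ A} := by
      ext y
      simp only [Set.mem_setOf_eq, Set.mem_image, Prod.exists]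
      constructor
      · rintro ⟨-, -, x, hx⟩; exact ⟨y, x, hx, rfl⟩
      · rintro ⟨y', x, hx, rfl⟩; exact ⟨hm.1, hm.2, x, hx⟩
    rw [this]
    apply AnalyticSet.image_of_continuous _ continuous_fst
    have : Nonempty (Fin m) := ⟨⟨0, hm1⟩⟩
    have hset : {p : Y × (Fin (m + 1) → X) |
          (∀ j : Fin m, G (p.2 j.castSucc) (p.2 j.succ)) ∧ (p.1, p.2 0) ∈ A ∧
            (p.1, p.2 (Fin.last m)) ∈ A} =
        (⋂ j : Fin m, (fun p : Y × (Fin (m + 1) → X) => (p.2 j.castSucc, p.2 j.succ)) ⁻¹'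
            {q : X × X | G q.1 q.2}) ∩
          ((fun p : Y × (Fin (m + 1) → X) => (p.1, p.2 0)) ⁻¹' A) ∩
          ((fun p : Y × (Fin (m + 1) → X) => (p.1, p.2 (Fin.last m))) ⁻¹' A) := by
      ext p
      simp only [Set.mem_setOf_eq, Set.mem_inter_iff, Set.mem_iInter, Set.mem_preimage]
      tauto
    rw [hset]
    have hint : ∀ {Z : Type} [TopologicalSpace Z] [T2Space Z] (s t : Set Z),
        AnalyticSet s → AnalyticSet t → AnalyticSet (s ∩ t) := by
      intro Z _ _ s t hs ht
      rw [Set.inter_eq_iInter]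
      exact AnalyticSet.iInter fun b => by cases b <;> simpa
    apply hint
    apply hint
    · exact AnalyticSet.iInter fun j => hana.preimage (by fun_prop)
    · exact hA.preimage (by fun_prop)
    · exact hA.preimage (by fun_prop)
  · convert analyticSet_empty
    ext y
    simp only [Set.mem_setOf_eq, Set.mem_empty_iff_false, iff_false]
    tauto
end

section
/- Let G be an analytic graph on a Polish space X, let ℓ be a natural number, and let A ⊆ X be analytic with Φ(A,ℓ). Then there is a Borel set B ⊆ X with A ⊆ B and Φ(B,ℓ). -/
open MeasureTheory

/-! The relation `D` "joined by an odd walk of length `> 2ℓ - 1`" is a countable union of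
iterated compositions of the analytic relation `G`, hence analytic, and `Φ(A, ℓ)` says that
`A × A` misses `D`. Lusin separation, applied twice, then enlarges `A` to a Borel set `B` with
`B × B` still missing `D`: first separate `A` from its `D`-image to get `B₁`, then separate `A`
from the `D`-preimage of `B₁` to get `B₂`, and take `B = B₁ ∩ B₂`. -/

open Set
open scoped SetRel

namespace MeasureTheory

variable {α β γ : Type*} [TopologicalSpace α] [TopologicalSpace β] [TopologicalSpace γ]

theorem AnalyticSet.inter [T2Space α] {s t : Set α} (hs : AnalyticSet s) (ht : AnalyticSet t) :
    AnalyticSet (s ∩ t) := by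
  rw [inter_eq_iInter]
  exact AnalyticSet.iInter (Bool.forall_bool.2 ⟨ht, hs⟩)

section SetRel

variable [PolishSpace α] [PolishSpace β] [PolishSpace γ]

theorem AnalyticSet.setRel_image {R : SetRel α β} {s : Set α} (hR : AnalyticSet R)
    (hs : AnalyticSet s) : AnalyticSet (R.image s) := by
  convert (hR.inter (hs.preimage continuous_fst)).image_of_continuous continuous_snd using 1
  ext b
  simp [and_comm]

theorem AnalyticSet.setRel_preimage {R : SetRel α β} {t : Set β} (hR : AnalyticSet R)
    (ht : AnalyticSet t) : AnalyticSet (R.preimage t) := by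
  convert (hR.inter (ht.preimage continuous_snd)).image_of_continuous continuous_fst using 1
  ext a
  simp [and_comm]

theorem AnalyticSet.setRel_comp {R : SetRel α β} {S : SetRel β γ} (hR : AnalyticSet R)
    (hS : AnalyticSet S) : AnalyticSet (R ○ S) := by
  have hRS : AnalyticSet {q : α × β × γ | (q.1, q.2.1) ∈ R ∧ (q.2.1, q.2.2) ∈ S} :=
    (hR.preimage (by fun_prop)).inter (hS.preimage (by fun_prop))
  convert hRS.image_of_continuous (by fun_prop : Continuous fun q : α × β × γ => (q.1, q.2.2))
    using 1
  ext ⟨a, c⟩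
  simp

end SetRel

theorem AnalyticSet.exists_measurableSet_superset_disjoint_prod_self [PolishSpace α]
    [MeasurableSpace α] [BorelSpace α] {D : SetRel α α} {A : Set α}
    (hD : AnalyticSet D) (hA : AnalyticSet A) (hAD : Disjoint (A ×ˢ A) D) :
    ∃ B, MeasurableSet B ∧ A ⊆ B ∧ Disjoint (B ×ˢ B) D := by
  have hA_image : Disjoint A (D.image A) := by
    refine disjoint_left.2 fun x hxA ⟨a, haA, hax⟩ => ?_
    exact disjoint_left.1 hAD ⟨haA, hxA⟩ hax
  obtain ⟨B₁, hAB₁, hB₁, hB₁_meas⟩ := hA.measurablySeparable (hD.setRel_image hA) hA_image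
  have hA_preimage : Disjoint A (D.preimage B₁) := by
    refine disjoint_left.2 fun x hxA ⟨b, hbB₁, hxb⟩ => ?_
    exact disjoint_left.1 hB₁ ⟨x, hxA, hxb⟩ hbB₁
  obtain ⟨B₂, hAB₂, hB₂, hB₂_meas⟩ :=
    hA.measurablySeparable (hD.setRel_preimage hB₁_meas.analyticSet) hA_preimage
  refine ⟨B₁ ∩ B₂, hB₁_meas.inter hB₂_meas, subset_inter hAB₁ hAB₂, ?_⟩
  refine disjoint_left.2 fun ⟨x, y⟩ ⟨hx, hy⟩ hxy => ?_
  exact disjoint_left.1 hB₂ ⟨y, hy.1, hxy⟩ hx.2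

end MeasureTheory

section Walks

variable {α : Type*} {G : α → α → Prop}

theorem zero_mem_walkLens_iff {u v : α} : 0 ∈ walkLens G u v ↔ u = v := by
  constructor
  · rintro ⟨w, rfl, rfl, -⟩
    rfl
  · rintro rfl
    exact ⟨fun _ => u, rfl, rfl, fun _ h => (Nat.not_lt_zero _ h).elim⟩

theorem succ_mem_walkLens_iff {u v : α} {m : ℕ} :
    m + 1 ∈ walkLens G u v ↔ ∃ z, m ∈ walkLens G u z ∧ G z v := by
  constructor
  · rintro ⟨w, rfl, rfl, hw⟩
    exact ⟨w m, ⟨w, rfl, rfl, fun j hj => hw j (by omega)⟩, hw m m.lt_succ_self⟩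
  · rintro ⟨z, ⟨w, rfl, rfl, hw⟩, hzv⟩
    refine ⟨Function.update w (m + 1) v, by simp, by simp, fun j hj => ?_⟩
    rcases Nat.lt_succ_iff_lt_or_eq.1 hj with hjm | rfl
    · simpa [Function.update_of_ne (show j ≠ m + 1 by omega),
        Function.update_of_ne (show j + 1 ≠ m + 1 by omega)] using hw j hjm
    · simpa [Function.update_of_ne (show j ≠ j + 1 by omega)] using hzv

variable (G) in
def walkRel (m : ℕ) : SetRel α α := {p | m ∈ walkLens G p.1 p.2}

theorem walkRel_zero : walkRel G 0 = diagonal α := by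
  ext ⟨u, v⟩
  exact zero_mem_walkLens_iff

theorem walkRel_succ (m : ℕ) : walkRel G (m + 1) = walkRel G m ○ {p | G p.1 p.2} := by
  ext ⟨u, v⟩
  exact succ_mem_walkLens_iff

variable (G) in
def longOddWalkRel (k : ℕ) : SetRel α α :=
  {p | ∃ m ∈ walkLens G p.1 p.2, Odd m ∧ 2 * k - 1 < m}

theorem phiProp_iff_disjoint_longOddWalkRel {A : Set α} {k : ℕ} :
    PhiProp G A k ↔ Disjoint (A ×ˢ A) (longOddWalkRel G k) := by
  simp only [PhiProp, longOddWalkRel, walkLens, disjoint_left, mem_prod]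
  constructor
  · rintro hPhi ⟨u, v⟩ ⟨hu, hv⟩ ⟨m, ⟨w, rfl, rfl, hw⟩, hm, hlong⟩
    exact hlong.not_ge (hPhi m w hm hw hu hv)
  · intro hdisj m w hm hw hu hv
    by_contra! hlong
    exact hdisj (a := (w 0, w m)) ⟨hu, hv⟩ ⟨m, ⟨w, rfl, rfl, hw⟩, hm, hlong⟩

variable [TopologicalSpace α] [PolishSpace α]

theorem analyticSet_walkRel (hG : AnalyticSet {p : α × α | G p.1 p.2}) (m : ℕ) :
    AnalyticSet (walkRel G m) := by
  induction m with
  | zero => exact walkRel_zero (G := G) ▸ isClosed_diagonal.analyticSet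
  | succ m ih => exact walkRel_succ (G := G) m ▸ ih.setRel_comp hG

theorem analyticSet_longOddWalkRel (hG : AnalyticSet {p : α × α | G p.1 p.2}) (k : ℕ) :
    AnalyticSet (longOddWalkRel G k) := by
  have : longOddWalkRel G k = ⋃ m : {m : ℕ // Odd m ∧ 2 * k - 1 < m}, walkRel G m := by
    ext p
    simp only [longOddWalkRel, walkRel, mem_iUnion, Subtype.exists, exists_prop]
    exact ⟨fun ⟨m, hm, h⟩ => ⟨m, h, hm⟩, fun ⟨m, h, hm⟩ => ⟨m, hm, h⟩⟩
  rw [this]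
  exact AnalyticSet.iUnion fun m => analyticSet_walkRel hG m

end Walks

theorem stmt4_general {X : Type} [TopologicalSpace X] [PolishSpace X]
    [MeasurableSpace X] [BorelSpace X]
    (G : X → X → Prop)
    (hana : AnalyticSet {p : X × X | G p.1 p.2}) (ℓ : ℕ)
    (A : Set X) (hA : AnalyticSet A) (hPhi : PhiProp G A ℓ) :
    ∃ B : Set X, MeasurableSet B ∧ A ⊆ B ∧ PhiProp G B ℓ := by
  obtain ⟨B, hB, hAB, hBD⟩ :=
    (analyticSet_longOddWalkRel hana ℓ).exists_measurableSet_superset_disjoint_prod_self hA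
      (phiProp_iff_disjoint_longOddWalkRel.1 hPhi)
  exact ⟨B, hB, hAB, phiProp_iff_disjoint_longOddWalkRel.2 hBD⟩

/-- If `G` is an analytic graph on a Polish space `X`, `ℓ : ℕ`, and `A ⊆ X`
is analytic with `Φ(A,ℓ)`, then there is a Borel `B ⊇ A` with `Φ(B,ℓ)`. -/
theorem stmt4 {X : Type} [TopologicalSpace X] [PolishSpace X]
    [MeasurableSpace X] [BorelSpace X]
    (G : X → X → Prop) (hsym : Symmetric G) (hirr : Irreflexive G)
    (hana : AnalyticSet {p : X × X | G p.1 p.2}) (ℓ : ℕ)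
    (A : Set X) (hA : AnalyticSet A) (hPhi : PhiProp G A ℓ) :
    ∃ B : Set X, MeasurableSet B ∧ A ⊆ B ∧ PhiProp G B ℓ :=
  stmt4_general G hana ℓ A hA hPhi
end

section
/- Let G be an analytic graph on a Polish space X, let A ⊆ X be analytic and let n be a natural number with Φ(A,n). Then there is a Borel set B ⊆ X containing the union of all connected components of G that meet A, such that B is G-invariant (a union of connected components of G) and the restriction of G to B admits a Borel proper 2-coloring, i.e., a Borel map c_B : B → {0,1} with c_B(x) ≠ c_B(y) whenever x, y ∈ B and (x,y) ∈ G. -/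
/-!
Let `E` and `O` be the sets of points reached from `A` by walks of even and of odd length. They
are analytic, every neighbour of a point of one lies in the other, and `Φ(A,n)` makes them
disjoint: an even and an odd walk from `A` to a common point would give odd walks between points
of `A` of every large length. Separating `E` from `O` by a Borel set, then repeatedly shrinking
the two Borel approximations so that the neighbours of each new one lie in the previous
approximation of the other, the intersections are disjoint Borel sets `C ⊇ E`, `D ⊇ O` with all
neighbours of `C` in `D` and vice versa. Then `B = C ∪ D`, coloured by membership in `C`, works.
-/

open MeasureTheory

section Walks

variable {α : Type*} {G : α → α → Prop}

lemma isWalk_zero (w : ℕ → α) : IsWalk G 0 w := fun _ hj => absurd hj (Nat.not_lt_zero _)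

lemma isWalk_succ_iff {m : ℕ} {w : ℕ → α} :
    IsWalk G (m + 1) w ↔ IsWalk G m w ∧ G (w m) (w (m + 1)) := by
  refine ⟨fun h => ⟨fun j hj => h j (by omega), h m (by omega)⟩, fun ⟨h, hm⟩ j hj => ?_⟩
  rcases Nat.lt_succ_iff_lt_or_eq.1 hj with hj | rfl
  exacts [h j hj, hm]

lemma zero_mem_walkLens (u : α) : 0 ∈ walkLens G u u :=
  ⟨fun _ => u, rfl, rfl, isWalk_zero _⟩

lemma one_mem_walkLens {u v : α} (h : G u v) : 1 ∈ walkLens G u v :=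
  ⟨fun j => if j = 0 then u else v, rfl, rfl, fun j hj => by
    obtain rfl : j = 0 := by omega
    simpa using h⟩

lemma add_mem_walkLens {u v x : α} {m₁ m₂ : ℕ} (h₁ : m₁ ∈ walkLens G u v)
    (h₂ : m₂ ∈ walkLens G v x) : m₁ + m₂ ∈ walkLens G u x := by
  obtain ⟨w₁, hw₁0, hw₁m, hw₁⟩ := h₁
  obtain ⟨w₂, hw₂0, hw₂m, hw₂⟩ := h₂
  refine ⟨fun j => if j ≤ m₁ then w₁ j else w₂ (j - m₁), by simp [hw₁0], ?_, fun j hj => ?_⟩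
  · rcases Nat.eq_zero_or_pos m₂ with rfl | hm₂
    · simp [hw₁m, ← hw₂0, hw₂m]
    · simp [show ¬ m₁ + m₂ ≤ m₁ by omega, hw₂m]
  · rcases lt_trichotomy j m₁ with hj₁ | rfl | hj₁
    · simpa [show j + 1 ≤ m₁ by omega, hj₁.le] using hw₁ j hj₁
    · simpa [hw₁m, ← hw₂0] using hw₂ 0 (by omega)
    · simpa [show ¬ j ≤ m₁ by omega, show ¬ j + 1 ≤ m₁ by omega,
        show j + 1 - m₁ = j - m₁ + 1 by omega] using hw₂ (j - m₁) (by omega)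

lemma mem_walkLens_symm (hG : Symmetric G) {u v : α} {m : ℕ} (h : m ∈ walkLens G u v) :
    m ∈ walkLens G v u := by
  obtain ⟨w, hw0, hwm, hw⟩ := h
  refine ⟨fun j => w (m - j), by simpa using hwm, by simpa using hw0, fun j hj => ?_⟩
  have := hG (hw (m - (j + 1)) (by omega))
  rwa [show m - (j + 1) + 1 = m - j by omega] at this

lemma exists_adj_of_mem_walkLens {u v : α} {m : ℕ} (h : m ∈ walkLens G u v) (hm : 0 < m) :
    ∃ y, G u y := by
  obtain ⟨w, rfl, -, hw⟩ := h
  exact ⟨w 1, hw 0 hm⟩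

/-- Walk back and forth along the first edge. -/
lemma add_two_mul_mem_walkLens (hG : Symmetric G) {u v : α} {m : ℕ} (h : m ∈ walkLens G u v)
    (hm : 0 < m) (t : ℕ) : m + 2 * t ∈ walkLens G u v := by
  obtain ⟨y, huy⟩ := exists_adj_of_mem_walkLens h hm
  induction t with
  | zero => exact h
  | succ t ih =>
    have hback : 2 ∈ walkLens G u u := add_mem_walkLens (one_mem_walkLens huy)
      (one_mem_walkLens (hG huy))
    simpa [Nat.mul_succ, add_comm, add_left_comm] using add_mem_walkLens hback ih

end Walks

lemma PhiProp.le_of_mem_walkLens {X : Type*} {G : X → X → Prop} {A : Set X} {k m : ℕ}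
    (hΦ : PhiProp G A k) {a b : X} (ha : a ∈ A) (hb : b ∈ A) (hab : m ∈ walkLens G a b)
    (hm : Odd m) : m ≤ 2 * k - 1 := by
  obtain ⟨w, rfl, rfl, hw⟩ := hab
  exact hΦ m w hm hw ha hb

def reachSet {X : Type*} (G : X → X → Prop) (A : Set X) (P : ℕ → Prop) : Set X :=
  {x | ∃ a ∈ A, ∃ m ∈ walkLens G a x, P m}

section Reach

variable {X : Type*} {G : X → X → Prop} {A : Set X}

lemma subset_reachSet_even : A ⊆ reachSet G A Even :=
  fun a ha => ⟨a, ha, 0, zero_mem_walkLens a, Even.zero⟩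

lemma mem_reachSet_of_adj {P Q : ℕ → Prop} (hPQ : ∀ m, P m → Q (m + 1)) {x y : X}
    (hx : x ∈ reachSet G A P) (hxy : G x y) : y ∈ reachSet G A Q := by
  obtain ⟨a, ha, m, hm, hPm⟩ := hx
  exact ⟨a, ha, m + 1, add_mem_walkLens hm (one_mem_walkLens hxy), hPQ m hPm⟩

lemma disjoint_reachSet_even_odd (hG : Symmetric G) {k : ℕ} (hΦ : PhiProp G A k) :
    Disjoint (reachSet G A Even) (reachSet G A Odd) := by
  refine Set.disjoint_left.2 fun x ⟨a, ha, m₁, hm₁, he⟩ ⟨b, hb, m₂, hm₂, ho⟩ => ?_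
  have hab : m₁ + m₂ ∈ walkLens G a b := add_mem_walkLens hm₁ (mem_walkLens_symm hG hm₂)
  have hodd : Odd (m₁ + m₂) := he.add_odd ho
  have := hΦ.le_of_mem_walkLens ha hb (add_two_mul_mem_walkLens hG hab hodd.pos k)
    (hodd.add_even (even_two_mul k))
  have := hodd.pos
  omega

end Reach

lemma MeasureTheory.AnalyticSet.inter_s5 {X : Type*} [TopologicalSpace X] [T2Space X]
    {s t : Set X} (hs : AnalyticSet s) (ht : AnalyticSet t) : AnalyticSet (s ∩ t) := by
  rw [Set.inter_eq_iInter]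
  exact AnalyticSet.iInter fun b => by cases b <;> assumption

section Analytic

variable {X : Type*} [TopologicalSpace X] [PolishSpace X] {G : X → X → Prop}

lemma analyticSet_setOf_exists_adj (hG : AnalyticSet {p : X × X | G p.1 p.2}) {T : Set X}
    (hT : AnalyticSet T) : AnalyticSet {x | ∃ y, G x y ∧ y ∈ T} := by
  have : {x | ∃ y, G x y ∧ y ∈ T} = Prod.fst '' ({p : X × X | G p.1 p.2} ∩ Prod.snd ⁻¹' T) := by
    ext x
    simp
  rw [this]
  exact (hG.inter_s5 (hT.preimage continuous_snd)).image_of_continuous continuous_fst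

lemma analyticSet_setOf_isWalk (hG : AnalyticSet {p : X × X | G p.1 p.2}) {A : Set X}
    (hA : AnalyticSet A) (m : ℕ) : AnalyticSet {w : ℕ → X | w 0 ∈ A ∧ IsWalk G m w} := by
  induction m with
  | zero =>
    simp only [isWalk_zero, and_true]
    exact hA.preimage (continuous_apply 0)
  | succ m ih =>
    have : {w : ℕ → X | w 0 ∈ A ∧ IsWalk G (m + 1) w} = {w | w 0 ∈ A ∧ IsWalk G m w} ∩
        (fun w => (w m, w (m + 1))) ⁻¹' {p : X × X | G p.1 p.2} := by
      ext w
      simp [isWalk_succ_iff, and_assoc]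
    rw [this]
    exact ih.inter_s5 (hG.preimage ((continuous_apply m).prodMk (continuous_apply (m + 1))))

lemma analyticSet_reachSet (hG : AnalyticSet {p : X × X | G p.1 p.2}) {A : Set X}
    (hA : AnalyticSet A) (P : ℕ → Prop) : AnalyticSet (reachSet G A P) := by
  have : reachSet G A P =
      ⋃ m : {m // P m}, (fun w : ℕ → X => w m) '' {w | w 0 ∈ A ∧ IsWalk G m w} := by
    ext x
    simp only [reachSet, walkLens, Set.mem_iUnion, Set.mem_image, Subtype.exists]
    constructor
    · rintro ⟨_, ha, m, ⟨w, rfl, rfl, hw⟩, hPm⟩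
      exact ⟨m, hPm, w, ⟨ha, hw⟩, rfl⟩
    · rintro ⟨m, hPm, w, ⟨ha, hw⟩, rfl⟩
      exact ⟨w 0, ha, m, ⟨w, rfl, rfl, hw⟩, hPm⟩
  rw [this]
  exact AnalyticSet.iUnion fun m =>
    (analyticSet_setOf_isWalk hG hA m).image_of_continuous (continuous_apply m.1)

end Analytic

section Separation

variable {X : Type*} [TopologicalSpace X] [PolishSpace X] [MeasurableSpace X] [BorelSpace X]
  {G : X → X → Prop}

lemma exists_measurableSet_superset_forall_adj_mem (hG : AnalyticSet {p : X × X | G p.1 p.2})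
    {E D : Set X} (hE : AnalyticSet E) (hD : MeasurableSet D) (hED : ∀ x ∈ E, ∀ y, G x y → y ∈ D) :
    ∃ C, MeasurableSet C ∧ E ⊆ C ∧ ∀ x ∈ C, ∀ y, G x y → y ∈ D := by
  have hS : Disjoint E {x | ∃ y, G x y ∧ y ∈ Dᶜ} :=
    Set.disjoint_left.2 fun x hx ⟨y, hxy, hy⟩ => hy (hED x hx y hxy)
  obtain ⟨C, hEC, hSC, hC⟩ :=
    hE.measurablySeparable (analyticSet_setOf_exists_adj hG hD.compl.analyticSet) hS
  exact ⟨C, hC, hEC, fun x hx y hxy => by_contra fun hy => Set.disjoint_left.1 hSC ⟨y, hxy, hy⟩ hx⟩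

theorem exists_measurable_separation_forall_adj_mem (hG : AnalyticSet {p : X × X | G p.1 p.2})
    {E O : Set X} (hE : AnalyticSet E) (hO : AnalyticSet O) (hEO : Disjoint E O)
    (hEadj : ∀ x ∈ E, ∀ y, G x y → y ∈ O) (hOadj : ∀ x ∈ O, ∀ y, G x y → y ∈ E) :
    ∃ C D, MeasurableSet C ∧ MeasurableSet D ∧ E ⊆ C ∧ O ⊆ D ∧ Disjoint C D ∧
      (∀ x ∈ C, ∀ y, G x y → y ∈ D) ∧ ∀ x ∈ D, ∀ y, G x y → y ∈ C := by
  obtain ⟨C₀, hEC₀, hOC₀, hC₀⟩ := hE.measurablySeparable hO hEO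
  choose! shrinkE hshrinkE using fun D (hD : MeasurableSet D ∧ O ⊆ D) =>
    exists_measurableSet_superset_forall_adj_mem hG hE hD.1 fun x hx y hxy =>
      hD.2 (hEadj x hx y hxy)
  choose! shrinkO hshrinkO using fun C (hC : MeasurableSet C ∧ E ⊆ C) =>
    exists_measurableSet_superset_forall_adj_mem hG hO hC.1 fun x hx y hxy =>
      hC.2 (hOadj x hx y hxy)
  -- Each step shrinks both sets so that neighbours of the new ones lie in the previous ones.
  let seq : ℕ → Set X × Set X := fun k =>
    Nat.rec (C₀, C₀ᶜ) (fun _ p => (shrinkE p.2, shrinkO p.1)) k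
  have hseq : ∀ k, (MeasurableSet (seq k).1 ∧ E ⊆ (seq k).1) ∧
      MeasurableSet (seq k).2 ∧ O ⊆ (seq k).2 := by
    intro k
    induction k with
    | zero => exact ⟨⟨hC₀, hEC₀⟩, hC₀.compl, fun x hx hxC₀ => Set.disjoint_left.1 hOC₀ hx hxC₀⟩
    | succ k ih =>
      exact ⟨⟨(hshrinkE _ ih.2).1, (hshrinkE _ ih.2).2.1⟩, (hshrinkO _ ih.1).1,
        (hshrinkO _ ih.1).2.1⟩
  refine ⟨⋂ k, (seq k).1, ⋂ k, (seq k).2, .iInter fun k => (hseq k).1.1,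
    .iInter fun k => (hseq k).2.1, Set.subset_iInter fun k => (hseq k).1.2,
    Set.subset_iInter fun k => (hseq k).2.2,
    (disjoint_compl_right (a := C₀)).mono (Set.iInter_subset _ 0) (Set.iInter_subset _ 0), ?_, ?_⟩
  · exact fun x hx y hxy => Set.mem_iInter.2 fun k =>
      (hshrinkE _ (hseq k).2).2.2 x (Set.mem_iInter.1 hx (k + 1)) y hxy
  · exact fun x hx y hxy => Set.mem_iInter.2 fun k =>
      (hshrinkO _ (hseq k).1).2.2 x (Set.mem_iInter.1 hx (k + 1)) y hxy

end Separation

lemma exists_measurable_coloring_of_forall_adj_mem {X : Type*} [MeasurableSpace X]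
    {G : X → X → Prop} {C D : Set X} (hC : MeasurableSet C) (hCD : Disjoint C D)
    (hCadj : ∀ x ∈ C, ∀ y, G x y → y ∈ D) (hDadj : ∀ x ∈ D, ∀ y, G x y → y ∈ C) :
    ∃ c : X → Fin 2, Measurable c ∧ ∀ x ∈ C ∪ D, ∀ y, G x y → c x ≠ c y := by
  classical
  refine ⟨fun x => if x ∈ C then 0 else 1, measurable_const.ite hC measurable_const, ?_⟩
  rintro x (hx | hx) y hxy
  · have hy : y ∉ C := fun hy => Set.disjoint_left.1 hCD hy (hCadj x hx y hxy)
    simp [hx, hy]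
  · simp [hDadj x hx y hxy, Set.disjoint_right.1 hCD hx]

theorem stmt5_general {X : Type} [TopologicalSpace X] [PolishSpace X]
    [MeasurableSpace X] [BorelSpace X]
    (G : X → X → Prop) (hsym : Symmetric G)
    (hana : AnalyticSet {p : X × X | G p.1 p.2})
    (A : Set X) (hA : AnalyticSet A) (n : ℕ) (hPhi : PhiProp G A n) :
    ∃ B : Set X, MeasurableSet B ∧ A ⊆ B ∧
      (∀ x ∈ B, ∀ y, G x y → y ∈ B) ∧
      ∃ cB : X → Fin 2, Measurable cB ∧
        ∀ x ∈ B, ∀ y ∈ B, G x y → cB x ≠ cB y := by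
  obtain ⟨C, D, hC, hD, hAC, -, hCD, hCadj, hDadj⟩ :=
    exists_measurable_separation_forall_adj_mem hana (analyticSet_reachSet hana hA Even)
      (analyticSet_reachSet hana hA Odd) (disjoint_reachSet_even_odd hsym hPhi)
      (fun _ hx _ => mem_reachSet_of_adj (fun _ => Even.add_one) hx)
      (fun _ hx _ => mem_reachSet_of_adj (fun _ => Odd.add_one) hx)
  obtain ⟨c, hc, hcG⟩ := exists_measurable_coloring_of_forall_adj_mem hC hCD hCadj hDadj
  refine ⟨C ∪ D, hC.union hD, subset_reachSet_even.trans (hAC.trans Set.subset_union_left),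
    ?_, c, hc, fun x hx y _ => hcG x hx y⟩
  rintro x (hx | hx) y hxy
  exacts [Or.inr (hCadj x hx y hxy), Or.inl (hDadj x hx y hxy)]

/-- If `G` is an analytic graph on a Polish space `X`, `A ⊆ X` is analytic
and `Φ(A,n)` holds, then there is a `G`-invariant Borel set `B ⊇ A` (hence
containing all connected components meeting `A`) whose induced subgraph
admits a Borel proper 2-coloring. -/
theorem stmt5 {X : Type} [TopologicalSpace X] [PolishSpace X]
    [MeasurableSpace X] [BorelSpace X]
    (G : X → X → Prop) (hsym : Symmetric G) (hirr : Irreflexive G)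
    (hana : AnalyticSet {p : X × X | G p.1 p.2})
    (A : Set X) (hA : AnalyticSet A) (n : ℕ) (hPhi : PhiProp G A n) :
    ∃ B : Set X, MeasurableSet B ∧ A ⊆ B ∧
      (∀ x ∈ B, ∀ y, G x y → y ∈ B) ∧
      ∃ cB : X → Fin 2, Measurable cB ∧
        ∀ x ∈ B, ∀ y ∈ B, G x y → cB x ≠ cB y :=
  stmt5_general G hsym hana A hA n hPhi
end

section
/- Let G be an analytic graph on a Polish space X. If G admits no Borel proper 2-coloring (i.e., χ_B(G) > 2), then X cannot be written as a countable union X = ⋃_{m<ω} B_m of Borel sets B_m such that for each m there is k_m ∈ ℕ with Φ(B_m, k_m). (In the paper's terminology: V(G) is large.) -/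
open MeasureTheory

namespace Stmt6

open Set

set_option linter.unusedSectionVars false
set_option linter.unusedVariables false

/-! ### Combinatorics of walks -/

/-- There is a walk of length `ℓ` from `u` to `v`. -/
def Conn {α : Type*} (Adj : α → α → Prop) (ℓ : ℕ) (u v : α) : Prop :=
  ∃ w : ℕ → α, w 0 = u ∧ w ℓ = v ∧ IsWalk Adj ℓ w

variable {α : Type*} {Adj : α → α → Prop}

theorem conn_zero_iff {u v : α} : Conn Adj 0 u v ↔ u = v := by
  constructor
  · rintro ⟨w, h0, h1, -⟩; rw [← h0, ← h1]
  · rintro rfl; exact ⟨fun _ => u, rfl, rfl, fun j hj => absurd hj (Nat.not_lt_zero j)⟩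

theorem conn_succ_iff {ℓ : ℕ} {u v : α} :
    Conn Adj (ℓ + 1) u v ↔ ∃ z, Conn Adj ℓ u z ∧ Adj z v := by
  constructor
  · rintro ⟨w, h0, h1, hw⟩
    refine ⟨w ℓ, ⟨w, h0, rfl, fun j hj => hw j (by omega)⟩, ?_⟩
    have := hw ℓ (by omega)
    rwa [h1] at this
  · rintro ⟨z, ⟨w, h0, h1, hw⟩, hadj⟩
    refine ⟨fun i => if i ≤ ℓ then w i else v, by simp [h0], by simp, ?_⟩
    intro j hj
    rcases Nat.lt_or_ge j ℓ with h | h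
    · simp only [if_pos (Nat.le_of_lt h), if_pos (Nat.succ_le_of_lt h)]
      exact hw j h
    · have hjl : j = ℓ := by omega
      subst hjl
      simp only [le_refl, if_pos, if_neg (by omega : ¬ j + 1 ≤ j)]
      rwa [h1]

theorem conn_trans {ℓ ℓ' : ℕ} {u v t : α} (h1 : Conn Adj ℓ u v) (h2 : Conn Adj ℓ' v t) :
    Conn Adj (ℓ + ℓ') u t := by
  induction ℓ' generalizing t with
  | zero => rw [conn_zero_iff] at h2; rwa [← h2]
  | succ n ih =>
    rw [conn_succ_iff] at h2
    obtain ⟨z, hz, hadj⟩ := h2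
    exact conn_succ_iff.2 ⟨z, ih hz, hadj⟩

theorem conn_symm (hsym : Symmetric Adj) {ℓ : ℕ} {u v : α} (h : Conn Adj ℓ u v) :
    Conn Adj ℓ v u := by
  induction ℓ generalizing v with
  | zero => rw [conn_zero_iff] at h ⊢; exact h.symm
  | succ n ih =>
    rw [conn_succ_iff] at h
    obtain ⟨z, hz, hadj⟩ := h
    have h1 : Conn Adj 1 v z :=
      conn_succ_iff.2 ⟨v, conn_zero_iff.2 rfl, hsym hadj⟩
    have := conn_trans h1 (ih hz)
    rwa [Nat.add_comm] at this

theorem conn_pad (hsym : Symmetric Adj) {ℓ : ℕ} {u v : α} (hℓ : 1 ≤ ℓ) (h : Conn Adj ℓ u v) :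
    Conn Adj (ℓ + 2) u v := by
  obtain ⟨n, rfl⟩ : ∃ n, ℓ = n + 1 := ⟨ℓ - 1, by omega⟩
  rw [conn_succ_iff] at h
  obtain ⟨z, hz, hadj⟩ := h
  have h3 : Conn Adj 3 z v :=
    conn_succ_iff.2 ⟨z, conn_succ_iff.2 ⟨v, conn_succ_iff.2
      ⟨z, conn_zero_iff.2 rfl, hadj⟩, hsym hadj⟩, hadj⟩
  have h' := conn_trans hz h3
  have heq : n + 3 = n + 1 + 2 := by omega
  rwa [heq] at h'

theorem conn_pad_many (hsym : Symmetric Adj) {ℓ : ℕ} {u v : α} (hℓ : 1 ≤ ℓ)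
    (h : Conn Adj ℓ u v) : ∀ t, Conn Adj (ℓ + 2 * t) u v := by
  intro t
  induction t with
  | zero => simpa using h
  | succ n ih =>
    have := conn_pad hsym (by omega) ih
    have heq : ℓ + 2 * n + 2 = ℓ + 2 * (n + 1) := by omega
    rwa [heq] at this

theorem phi_no_odd {X : Type*} {G : X → X → Prop} {A : Set X} {k : ℕ}
    (hphi : PhiProp G A k) (hsym : Symmetric G) {ℓ : ℕ} {u v : X}
    (hodd : Odd ℓ) (hconn : Conn G ℓ u v) (hu : u ∈ A) (hv : v ∈ A) : False := by
  have h1 : 1 ≤ ℓ := by obtain ⟨m, rfl⟩ := hodd; omega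
  obtain ⟨w, h0, hl, hw⟩ := conn_pad_many hsym h1 hconn (k + 1)
  have hodd' : Odd (ℓ + 2 * (k + 1)) := hodd.add_even ⟨k + 1, by ring⟩
  have := hphi (ℓ + 2 * (k + 1)) w hodd' hw (by rwa [h0]) (by rwa [hl])
  omega

/-! ### Analytic sets associated to walks -/

theorem analyticSet_inter {β : Type*} [TopologicalSpace β] [T2Space β] {s t : Set β}
    (hs : AnalyticSet s) (ht : AnalyticSet t) : AnalyticSet (s ∩ t) := by
  rw [Set.inter_eq_iInter]
  exact AnalyticSet.iInter fun b => by cases b <;> simpa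

theorem analyticSet_union {β : Type*} [TopologicalSpace β] {s t : Set β}
    (hs : AnalyticSet s) (ht : AnalyticSet t) : AnalyticSet (s ∪ t) := by
  rw [Set.union_eq_iUnion]
  exact AnalyticSet.iUnion fun b => by cases b <;> simpa

variable {X : Type} [TopologicalSpace X] [PolishSpace X] [MeasurableSpace X] [BorelSpace X]

variable (G : X → X → Prop)

/-- Pairs joined by a walk of length `ℓ`. -/
def connSet (ℓ : ℕ) : Set (X × X) := {p | Conn G ℓ p.1 p.2}

theorem analyticSet_connSet (hana : AnalyticSet {p : X × X | G p.1 p.2}) (ℓ : ℕ) :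
    AnalyticSet (connSet G ℓ) := by
  induction ℓ with
  | zero =>
    have h0 : connSet G 0 = {p : X × X | p.1 = p.2} := by
      ext p; simp [connSet, conn_zero_iff]
    rw [h0]
    exact (isClosed_eq continuous_fst continuous_snd).measurableSet.analyticSet
  | succ n ih =>
    have heq : connSet G (n + 1) =
        (fun q : X × X × X => (q.1, q.2.2)) ''
          (((fun q : X × X × X => (q.1, q.2.1)) ⁻¹' connSet G n) ∩
           ((fun q : X × X × X => q.2) ⁻¹' {p : X × X | G p.1 p.2})) := by
      ext ⟨u, v⟩
      simp only [connSet, mem_image, mem_inter_iff, mem_preimage, mem_setOf_eq, Prod.exists]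
      constructor
      · intro h
        rw [conn_succ_iff] at h
        obtain ⟨z, hz, hadj⟩ := h
        exact ⟨u, z, v, ⟨hz, hadj⟩, rfl⟩
      · rintro ⟨a, z, c, ⟨hz, hadj⟩, heq⟩
        rw [Prod.mk.injEq] at heq
        obtain ⟨rfl, rfl⟩ := heq
        exact conn_succ_iff.2 ⟨z, hz, hadj⟩
    rw [heq]
    have hpre1 : AnalyticSet ((fun q : X × X × X => (q.1, q.2.1)) ⁻¹' connSet G n) :=
      ih.preimage (continuous_fst.prodMk (continuous_fst.comp continuous_snd))
    have hpre2 : AnalyticSet ((fun q : X × X × X => q.2) ⁻¹' {p : X × X | G p.1 p.2}) :=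
      hana.preimage continuous_snd
    exact (analyticSet_inter hpre1 hpre2).image_of_continuous
      (continuous_fst.prodMk (continuous_snd.comp continuous_snd))

/-- Points reachable from `D` by a walk of length `ℓ`. -/
def reachLen (ℓ : ℕ) (D : Set X) : Set X :=
  Prod.snd '' ((Prod.fst ⁻¹' D) ∩ connSet G ℓ)

theorem mem_reachLen {ℓ : ℕ} {D : Set X} {v : X} :
    v ∈ reachLen G ℓ D ↔ ∃ u, u ∈ D ∧ Conn G ℓ u v := by
  simp only [reachLen, mem_image, mem_inter_iff, mem_preimage, connSet, mem_setOf_eq,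
    Prod.exists]
  constructor
  · rintro ⟨a, b, ⟨ha, hc⟩, rfl⟩; exact ⟨a, ha, hc⟩
  · rintro ⟨u, hu, hc⟩; exact ⟨u, v, ⟨hu, hc⟩, rfl⟩

theorem analyticSet_reachLen (hana : AnalyticSet {p : X × X | G p.1 p.2}) {ℓ : ℕ}
    {D : Set X} (hD : AnalyticSet D) : AnalyticSet (reachLen G ℓ D) :=
  (analyticSet_inter (hD.preimage continuous_fst)
    (analyticSet_connSet G hana ℓ)).image_of_continuous continuous_snd

/-- Points reachable from `D` by a walk of any length. -/
def reachSet (D : Set X) : Set X := ⋃ ℓ, reachLen G ℓ D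

theorem mem_reachSet {D : Set X} {v : X} :
    v ∈ reachSet G D ↔ ∃ ℓ u, u ∈ D ∧ Conn G ℓ u v := by
  simp only [reachSet, mem_iUnion, mem_reachLen]

theorem analyticSet_reachSet (hana : AnalyticSet {p : X × X | G p.1 p.2})
    {D : Set X} (hD : AnalyticSet D) : AnalyticSet (reachSet G D) :=
  AnalyticSet.iUnion fun ℓ => analyticSet_reachLen G hana hD

/-! ### Parity source and anchor sets -/

open Classical in
/-- The set of points `y` with `y ∈ V ↔ p`. -/
noncomputable def srcSet (V : Set X) (p : Prop) : Set X := if p then V else Vᶜ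

theorem mem_srcSet {V : Set X} {p : Prop} {y : X} : y ∈ srcSet V p ↔ (y ∈ V ↔ p) := by
  by_cases hp : p <;> simp [srcSet, hp]

theorem measurableSet_srcSet {V : Set X} (hV : MeasurableSet V) (p : Prop) :
    MeasurableSet (srcSet V p) := by
  by_cases hp : p
  · simpa [srcSet, hp] using hV
  · simpa [srcSet, hp] using hV.compl

open Classical in
/-- The set of points of `B' b` which are forced to have the color corresponding
to the parity predicate `par` by the colorings already chosen on the sets
`B' j`, `j < b` (recorded by `Vp`). -/
noncomputable def anchorSet (B' Vp : ℕ → Set X) (b : ℕ) (par : ℕ → Prop) : Set X :=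
  B' b ∩ ⋃ j, ⋃ ℓ,
    if j < b then reachLen G ℓ (B' j ∩ srcSet (Vp j) (par ℓ)) else ∅

theorem mem_anchorSet {B' Vp : ℕ → Set X} {b : ℕ} {par : ℕ → Prop} {z : X} :
    z ∈ anchorSet G B' Vp b par ↔ z ∈ B' b ∧ ∃ j ℓ y, j < b ∧ y ∈ B' j ∧
      (y ∈ Vp j ↔ par ℓ) ∧ Conn G ℓ y z := by
  simp only [anchorSet, mem_inter_iff, mem_iUnion]
  refine and_congr_right fun _ => ?_
  constructor
  · rintro ⟨j, ℓ, hmem⟩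
    by_cases hj : j < b
    · rw [if_pos hj] at hmem
      obtain ⟨y, ⟨hyB, hyc⟩, hconn⟩ := (mem_reachLen G).1 hmem
      exact ⟨j, ℓ, y, hj, hyB, mem_srcSet.1 hyc, hconn⟩
    · rw [if_neg hj] at hmem
      exact absurd hmem (notMem_empty z)
  · rintro ⟨j, ℓ, y, hj, hyB, hyc, hconn⟩
    refine ⟨j, ℓ, ?_⟩
    rw [if_pos hj]
    exact (mem_reachLen G).2 ⟨y, ⟨hyB, mem_srcSet.2 hyc⟩, hconn⟩

theorem anchorSet_congr {B' Vp Vp' : ℕ → Set X} {b : ℕ} {par : ℕ → Prop}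
    (h : ∀ j, j < b → Vp j = Vp' j) :
    anchorSet G B' Vp b par = anchorSet G B' Vp' b par := by
  ext z
  rw [mem_anchorSet, mem_anchorSet]
  constructor
  · rintro ⟨hz, j, ℓ, y, hj, hyB, hyc, hconn⟩
    exact ⟨hz, j, ℓ, y, hj, hyB, by rwa [h j hj] at hyc, hconn⟩
  · rintro ⟨hz, j, ℓ, y, hj, hyB, hyc, hconn⟩
    exact ⟨hz, j, ℓ, y, hj, hyB, by rwa [h j hj], hconn⟩

theorem analyticSet_anchorSet (hana : AnalyticSet {p : X × X | G p.1 p.2})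
    {B' Vp : ℕ → Set X} (hB' : ∀ n, MeasurableSet (B' n)) (hVp : ∀ j, MeasurableSet (Vp j))
    (b : ℕ) (par : ℕ → Prop) : AnalyticSet (anchorSet G B' Vp b par) := by
  refine analyticSet_inter (hB' b).analyticSet ?_
  refine AnalyticSet.iUnion fun j => AnalyticSet.iUnion fun ℓ => ?_
  by_cases hj : j < b
  · rw [if_pos hj]
    exact analyticSet_reachLen G hana
      ((hB' j).inter (measurableSet_srcSet (hVp j) _)).analyticSet
  · rw [if_neg hj]
    exact analyticSet_empty

/-! ### Iterated (invariant) separation -/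

theorem omega_sep {P0 P1 : Set X} (hP0 : AnalyticSet P0) (hP1 : AnalyticSet P1)
    (hdisj : Disjoint P0 P1) (R : Set X → Set X)
    (hRanal : ∀ D, MeasurableSet D → AnalyticSet (R D))
    (hRdisj : ∀ D, Disjoint D P1 → Disjoint (R D) P1)
    (hRcont : ∀ D : ℕ → Set X, R (⋃ t, D t) ⊆ ⋃ t, R (D t)) :
    ∃ V : Set X, MeasurableSet V ∧ P0 ⊆ V ∧ Disjoint V P1 ∧ R V ⊆ V := by
  classical
  obtain ⟨u0, hu0s, hu0d, hu0m⟩ := hP0.measurablySeparable hP1 hdisj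
  have step : ∀ D : Set X, MeasurableSet D → Disjoint D P1 →
      ∃ D', (MeasurableSet D' ∧ Disjoint D' P1) ∧ R D ⊆ D' := by
    intro D hm hd
    obtain ⟨u, hus, hud, hum⟩ := (hRanal D hm).measurablySeparable hP1 (hRdisj D hd)
    exact ⟨u, ⟨hum, hud.symm⟩, hus⟩
  let F : {D : Set X // MeasurableSet D ∧ Disjoint D P1} →
      {D : Set X // MeasurableSet D ∧ Disjoint D P1} := fun D =>
    ⟨Classical.choose (step D.1 D.2.1 D.2.2), (Classical.choose_spec (step D.1 D.2.1 D.2.2)).1⟩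
  let seqS : ℕ → {D : Set X // MeasurableSet D ∧ Disjoint D P1} := fun t =>
    F^[t] ⟨u0, hu0m, hu0d.symm⟩
  have hseq_succ : ∀ t, seqS (t + 1) = F (seqS t) := by
    intro t
    simp only [seqS, Function.iterate_succ_apply']
  have hlink : ∀ t, R (seqS t).1 ⊆ (seqS (t + 1)).1 := by
    intro t
    rw [hseq_succ t]
    exact (Classical.choose_spec (step (seqS t).1 (seqS t).2.1 (seqS t).2.2)).2
  refine ⟨⋃ t, (seqS t).1, MeasurableSet.iUnion fun t => (seqS t).2.1, ?_, ?_, ?_⟩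
  · exact hu0s.trans (subset_iUnion (fun t => (seqS t).1) 0)
  · exact Set.disjoint_iUnion_left.2 fun t => (seqS t).2.2
  · intro x hx
    obtain ⟨t, hxt⟩ := mem_iUnion.1 (hRcont (fun t => (seqS t).1) hx)
    exact mem_iUnion.2 ⟨t + 1, hlink t hxt⟩

/-- One stage of the construction: a Borel set `V` which (under the appropriate
hypotheses) separates the two anchor sets and is closed under walks within `B' b`. -/
theorem stage_exists (B' : ℕ → Set X) (b : ℕ) (Vp : ℕ → Set X) :
    ∃ V : Set X, MeasurableSet V ∧
      (AnalyticSet {p : X × X | G p.1 p.2} → (∀ n, MeasurableSet (B' n)) →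
       (∀ j, MeasurableSet (Vp j)) →
       Disjoint (anchorSet G B' Vp b Even) (anchorSet G B' Vp b (fun ℓ => ¬ Even ℓ)) →
       (∀ z z' ℓ, z ∈ B' b → z' ∈ B' b → Conn G ℓ z z' →
          z' ∈ anchorSet G B' Vp b (fun ℓ => ¬ Even ℓ) →
          z ∈ anchorSet G B' Vp b (fun ℓ => ¬ Even ℓ)) →
       (anchorSet G B' Vp b Even ⊆ V ∧
        Disjoint V (anchorSet G B' Vp b (fun ℓ => ¬ Even ℓ)) ∧
        ∀ z z' ℓ, z ∈ B' b → z' ∈ B' b → Conn G ℓ z z' → z ∈ V → z' ∈ V)) := by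
  classical
  by_cases H : AnalyticSet {p : X × X | G p.1 p.2} ∧ (∀ n, MeasurableSet (B' n)) ∧
      (∀ j, MeasurableSet (Vp j)) ∧
      Disjoint (anchorSet G B' Vp b Even) (anchorSet G B' Vp b (fun ℓ => ¬ Even ℓ)) ∧
      (∀ z z' ℓ, z ∈ B' b → z' ∈ B' b → Conn G ℓ z z' →
        z' ∈ anchorSet G B' Vp b (fun ℓ => ¬ Even ℓ) →
        z ∈ anchorSet G B' Vp b (fun ℓ => ¬ Even ℓ))
  · obtain ⟨hana, hB'm, hVpm, hdis, hinv⟩ := H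
    have hA0 : AnalyticSet (anchorSet G B' Vp b Even) :=
      analyticSet_anchorSet G hana hB'm hVpm b Even
    have hA1 : AnalyticSet (anchorSet G B' Vp b (fun ℓ => ¬ Even ℓ)) :=
      analyticSet_anchorSet G hana hB'm hVpm b (fun ℓ => ¬ Even ℓ)
    have hRanal : ∀ D, MeasurableSet D →
        AnalyticSet (D ∪ (B' b ∩ reachSet G (D ∩ B' b))) := by
      intro D hD
      exact analyticSet_union hD.analyticSet
        (analyticSet_inter (hB'm b).analyticSet
          (analyticSet_reachSet G hana (hD.inter (hB'm b)).analyticSet))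
    have hRdisj : ∀ D, Disjoint D (anchorSet G B' Vp b (fun ℓ => ¬ Even ℓ)) →
        Disjoint (D ∪ (B' b ∩ reachSet G (D ∩ B' b)))
          (anchorSet G B' Vp b (fun ℓ => ¬ Even ℓ)) := by
      intro D hd
      rw [Set.disjoint_left]
      rintro z (hz | ⟨hzB, hzr⟩) hz1
      · exact Set.disjoint_left.1 hd hz hz1
      · obtain ⟨ℓ, u, ⟨huD, huB⟩, hconn⟩ := (mem_reachSet G).1 hzr
        have hu1 := hinv u z ℓ huB hzB hconn hz1
        exact Set.disjoint_left.1 hd huD hu1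
    have hRcont : ∀ D : ℕ → Set X,
        ((⋃ t, D t) ∪ (B' b ∩ reachSet G ((⋃ t, D t) ∩ B' b))) ⊆
          ⋃ t, (D t ∪ (B' b ∩ reachSet G (D t ∩ B' b))) := by
      intro D x hx
      rcases hx with hx | ⟨hxB, hxr⟩
      · obtain ⟨t, hxt⟩ := mem_iUnion.1 hx
        exact mem_iUnion.2 ⟨t, Or.inl hxt⟩
      · obtain ⟨ℓ, u, ⟨huU, huB⟩, hc⟩ := (mem_reachSet G).1 hxr
        obtain ⟨t, hut⟩ := mem_iUnion.1 huU
        exact mem_iUnion.2 ⟨t, Or.inr ⟨hxB, (mem_reachSet G).2 ⟨ℓ, u, ⟨hut, huB⟩, hc⟩⟩⟩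
    obtain ⟨V, hVm, hP0V, hVd, hRV⟩ :=
      omega_sep hA0 hA1 hdis (fun D => D ∪ (B' b ∩ reachSet G (D ∩ B' b)))
        hRanal hRdisj hRcont
    refine ⟨V, hVm, fun _ _ _ _ _ => ⟨hP0V, hVd, ?_⟩⟩
    intro z z' ℓ hz hz' hconn hzV
    have hz'R : z' ∈ V ∪ (B' b ∩ reachSet G (V ∩ B' b)) :=
      Or.inr ⟨hz', (mem_reachSet G).2 ⟨ℓ, z, ⟨hzV, hz⟩, hconn⟩⟩
    exact hRV hz'R
  · exact ⟨∅, MeasurableSet.empty, fun h1 h2 h3 h4 h5 => absurd ⟨h1, h2, h3, h4, h5⟩ H⟩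

/-- The sequence of "color 0" Borel sets, built by strong recursion. -/
noncomputable def stageV (B' : ℕ → Set X) : ℕ → Set X :=
  WellFounded.fix (wellFounded_lt : WellFounded ((· < ·) : ℕ → ℕ → Prop))
    (fun b prev => Classical.choose
      (stage_exists G B' b (fun j => if h : j < b then prev j h else ∅)))

theorem stageV_eq (B' : ℕ → Set X) (b : ℕ) :
    stageV G B' b = Classical.choose
      (stage_exists G B' b (fun j => if h : j < b then stageV G B' j else ∅)) := by
  rw [stageV, WellFounded.fix_eq]

theorem measurableSet_stageV (B' : ℕ → Set X) (b : ℕ) : MeasurableSet (stageV G B' b) := by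
  rw [stageV_eq]
  exact (Classical.choose_spec
    (stage_exists G B' b (fun j => if h : j < b then stageV G B' j else ∅))).1

/-! ### The main construction -/

theorem exists_coloring (hsym : Symmetric G)
    (hana : AnalyticSet {p : X × X | G p.1 p.2})
    (B' : ℕ → Set X) (hmeas : ∀ n, MeasurableSet (B' n))
    (hmono : ∀ n z z' ℓ, Odd ℓ → Conn G ℓ z z' → z ∈ B' n → z' ∈ B' n → False)
    (huniq : ∀ t m n, t ∈ B' m → t ∈ B' n → m = n)
    (hcov : ∀ x, ∃ n, x ∈ B' n) :
    ∃ f : X → Fin 2, Measurable f ∧ ∀ x y, G x y → f x ≠ f y := by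
  classical
  have hVsm : ∀ b, MeasurableSet (stageV G B' b) := measurableSet_stageV G B'
  -- the conditional specification of each stage, with anchor sets relative to `stageV G B'`
  have hspec : ∀ b,
      Disjoint (anchorSet G B' (stageV G B') b Even)
        (anchorSet G B' (stageV G B') b (fun ℓ => ¬ Even ℓ)) →
      (∀ z z' ℓ, z ∈ B' b → z' ∈ B' b → Conn G ℓ z z' →
        z' ∈ anchorSet G B' (stageV G B') b (fun ℓ => ¬ Even ℓ) →
        z ∈ anchorSet G B' (stageV G B') b (fun ℓ => ¬ Even ℓ)) →
      (anchorSet G B' (stageV G B') b Even ⊆ stageV G B' b ∧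
       Disjoint (stageV G B' b) (anchorSet G B' (stageV G B') b (fun ℓ => ¬ Even ℓ)) ∧
       ∀ z z' ℓ, z ∈ B' b → z' ∈ B' b → Conn G ℓ z z' →
         z ∈ stageV G B' b → z' ∈ stageV G B' b) := by
    intro b hd hinv
    have hcongr : ∀ par : ℕ → Prop,
        anchorSet G B' (fun j => if h : j < b then stageV G B' j else ∅) b par =
        anchorSet G B' (stageV G B') b par := by
      intro par
      exact anchorSet_congr G (fun j hj => by simp [dif_pos hj])
    have hVpm : ∀ j, MeasurableSet ((fun j => if h : j < b then stageV G B' j else ∅) j) := by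
      intro j
      by_cases h : j < b
      · simpa [dif_pos h] using hVsm j
      · simp [dif_neg h]
    have hkey := (Classical.choose_spec
      (stage_exists G B' b (fun j => if h : j < b then stageV G B' j else ∅))).2
      hana hmeas hVpm
      (by rw [hcongr Even, hcongr (fun ℓ => ¬ Even ℓ)]; exact hd)
      (by rw [hcongr (fun ℓ => ¬ Even ℓ)]; exact hinv)
    obtain ⟨k1, k2, k3⟩ := hkey
    rw [← stageV_eq G B' b] at k1 k2 k3
    rw [hcongr Even] at k1
    rw [hcongr (fun ℓ => ¬ Even ℓ)] at k2
    exact ⟨k1, k2, k3⟩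
  -- the parity invariant
  have hdagger : ∀ b, ∀ i j z z' ℓ, i < b → j < b → z ∈ B' i → z' ∈ B' j →
      Conn G ℓ z z' → ((z ∈ stageV G B' i ↔ z' ∈ stageV G B' j) ↔ Even ℓ) := by
    intro b
    induction b with
    | zero =>
      intro i j z z' ℓ hi
      exact absurd hi (Nat.not_lt_zero i)
    | succ b IH =>
      -- first establish the hypotheses of `hspec b`
      have hdisjA : Disjoint (anchorSet G B' (stageV G B') b Even)
          (anchorSet G B' (stageV G B') b (fun ℓ => ¬ Even ℓ)) := by
        rw [Set.disjoint_left]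
        intro z hz0 hz1
        rw [mem_anchorSet] at hz0 hz1
        obtain ⟨hzB, j1, ℓ1, y1, hj1, hy1B, hy1c, hy1conn⟩ := hz0
        obtain ⟨-, j2, ℓ2, y2, hj2, hy2B, hy2c, hy2conn⟩ := hz1
        have hcomb : Conn G (ℓ1 + ℓ2) y1 y2 := conn_trans hy1conn (conn_symm hsym hy2conn)
        have hpar := IH j1 j2 y1 y2 (ℓ1 + ℓ2) hj1 hj2 hy1B hy2B hcomb
        rw [Nat.even_add] at hpar
        tauto
      have hinvA : ∀ z z' ℓ, z ∈ B' b → z' ∈ B' b → Conn G ℓ z z' →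
          z' ∈ anchorSet G B' (stageV G B') b (fun ℓ => ¬ Even ℓ) →
          z ∈ anchorSet G B' (stageV G B') b (fun ℓ => ¬ Even ℓ) := by
        intro z z' ℓ hz hz' hc h1
        rw [mem_anchorSet] at h1 ⊢
        obtain ⟨-, j1, ℓ1, y, hj1, hyB, hyc, hyconn⟩ := h1
        have heven : Even ℓ := by
          by_contra hodd
          exact hmono b z z' ℓ (Nat.not_even_iff_odd.1 hodd) hc hz hz'
        refine ⟨hz, j1, ℓ1 + ℓ, y, hj1, hyB, ?_, conn_trans hyconn (conn_symm hsym hc)⟩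
        rw [Nat.even_add]
        tauto
      obtain ⟨hA0V, hVdis, hclos⟩ := hspec b hdisjA hinvA
      -- the case of a walk from `B' i` (`i < b`) into `B' b`
      have hcase : ∀ i z z' ℓ, i < b → z ∈ B' i → z' ∈ B' b → Conn G ℓ z z' →
          ((z ∈ stageV G B' i ↔ z' ∈ stageV G B' b) ↔ Even ℓ) := by
        intro i z z' ℓ hi hzB hz'B hc
        by_cases hz : z ∈ stageV G B' i ↔ Even ℓ
        · have hz'A0 : z' ∈ anchorSet G B' (stageV G B') b Even :=
            (mem_anchorSet G).2 ⟨hz'B, i, ℓ, z, hi, hzB, hz, hc⟩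
          have hz'V : z' ∈ stageV G B' b := hA0V hz'A0
          tauto
        · have hz'A1 : z' ∈ anchorSet G B' (stageV G B') b (fun ℓ => ¬ Even ℓ) :=
            (mem_anchorSet G).2 ⟨hz'B, i, ℓ, z, hi, hzB, by tauto, hc⟩
          have hz'V : z' ∉ stageV G B' b :=
            fun hmem => Set.disjoint_left.1 hVdis hmem hz'A1
          tauto
      intro i j z z' ℓ hi hj hzB hz'B hc
      rcases Nat.lt_or_ge i b with hib | hib
      · rcases Nat.lt_or_ge j b with hjb | hjb
        · exact IH i j z z' ℓ hib hjb hzB hz'B hc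
        · have hjeq : j = b := by omega
          subst hjeq
          exact hcase i z z' ℓ hib hzB hz'B hc
      · have hieq : i = b := by omega
        subst hieq
        rcases Nat.lt_or_ge j i with hjb | hjb
        · have := hcase j z' z ℓ hjb hz'B hzB (conn_symm hsym hc)
          tauto
        · have hjeq : j = i := by omega
          subst hjeq
          by_cases hEv : Even ℓ
          · have h1 : z ∈ stageV G B' j → z' ∈ stageV G B' j :=
              fun h => hclos z z' ℓ hzB hz'B hc h
            have h2 : z' ∈ stageV G B' j → z ∈ stageV G B' j :=
              fun h => hclos z' z ℓ hz'B hzB (conn_symm hsym hc) h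
            tauto
          · exfalso
            exact hmono j z z' ℓ (Nat.not_even_iff_odd.1 hEv) hc hzB hz'B
  -- the coloring
  have hUm : MeasurableSet (⋃ b, B' b ∩ stageV G B' b) :=
    MeasurableSet.iUnion fun b => (hmeas b).inter (hVsm b)
  refine ⟨fun x => if x ∈ ⋃ b, B' b ∩ stageV G B' b then 0 else 1,
    Measurable.ite hUm measurable_const measurable_const, ?_⟩
  intro x y hxy
  obtain ⟨bx, hbx⟩ := hcov x
  obtain ⟨by', hby⟩ := hcov y
  have hc1 : Conn G 1 x y := conn_succ_iff.2 ⟨x, conn_zero_iff.2 rfl, hxy⟩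
  have hd := hdagger (max bx by' + 1) bx by' x y 1 (by omega) (by omega) hbx hby hc1
  have hodd1 : ¬ Even 1 := by decide
  have hU : ∀ t c, t ∈ B' c →
      (t ∈ ⋃ b, B' b ∩ stageV G B' b ↔ t ∈ stageV G B' c) := by
    intro t c htc
    constructor
    · intro hu
      obtain ⟨c', htc', htV⟩ := mem_iUnion.1 hu
      have hcc : c' = c := huniq t c' c htc' htc
      subst hcc
      exact htV
    · intro h
      exact mem_iUnion.2 ⟨c, htc, h⟩
  have hxU := hU x bx hbx
  have hyU := hU y by' hby
  by_cases hx : x ∈ ⋃ b, B' b ∩ stageV G B' b <;>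
    by_cases hy : y ∈ ⋃ b, B' b ∩ stageV G B' b
  · exact absurd (hd.1 (by tauto)) hodd1
  · simp [hx, hy]
  · simp [hx, hy]
  · exact absurd (hd.1 (by tauto)) hodd1

end Stmt6

/-- If the analytic graph `G` on the Polish space `X` admits no Borel proper
2-coloring, then `X` is not a countable union of Borel sets `B m` each
satisfying `Φ(B m, k m)` for some `k m`; i.e. `V(G)` is large. -/
theorem stmt6 {X : Type} [TopologicalSpace X] [PolishSpace X]
    [MeasurableSpace X] [BorelSpace X]
    (G : X → X → Prop) (hsym : Symmetric G) (hirr : Irreflexive G)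
    (hana : AnalyticSet {p : X × X | G p.1 p.2})
    (h2 : ¬∃ f : X → Fin 2, Measurable f ∧ ∀ x y, G x y → f x ≠ f y) :
    ¬∃ B : ℕ → Set X,
      (∀ m, MeasurableSet (B m) ∧ ∃ k, PhiProp G (B m) k) ∧
      (⋃ m, B m) = Set.univ := by
  rintro ⟨B, hB, hcov⟩
  classical
  set B' : ℕ → Set X := fun n => B n \ ⋃ j, ⋃ (_ : j < n), B j with hB'def
  have hmeas : ∀ n, MeasurableSet (B' n) := by
    intro n
    exact (hB n).1.diff
      (MeasurableSet.iUnion fun j => MeasurableSet.iUnion fun _ => (hB j).1)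
  have hsub : ∀ n, B' n ⊆ B n := fun n => Set.diff_subset
  have hcov' : ∀ x, ∃ n, x ∈ B' n := by
    intro x
    have hx : x ∈ ⋃ m, B m := hcov ▸ Set.mem_univ x
    obtain ⟨n0, hn0⟩ := Set.mem_iUnion.1 hx
    have hex : ∃ n, x ∈ B n := ⟨n0, hn0⟩
    refine ⟨Nat.find hex, Nat.find_spec hex, ?_⟩
    intro hmem
    simp only [Set.mem_iUnion] at hmem
    obtain ⟨j, hj, hxj⟩ := hmem
    exact Nat.find_min hex hj hxj
  have huniq : ∀ t m n, t ∈ B' m → t ∈ B' n → m = n := by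
    intro t m n hm hn
    by_contra hne
    rcases Nat.lt_or_ge m n with h | h
    · exact hn.2 (Set.mem_iUnion.2 ⟨m, Set.mem_iUnion.2 ⟨h, hm.1⟩⟩)
    · have h' : n < m := by omega
      exact hm.2 (Set.mem_iUnion.2 ⟨n, Set.mem_iUnion.2 ⟨h', hn.1⟩⟩)
  have hmono : ∀ n z z' ℓ, Odd ℓ → Stmt6.Conn G ℓ z z' → z ∈ B' n → z' ∈ B' n → False := by
    intro n z z' ℓ hodd hconn hz hz'
    obtain ⟨k, hphi⟩ := (hB n).2
    exact Stmt6.phi_no_odd hphi hsym hodd hconn (hsub n hz) (hsub n hz')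
  obtain ⟨f, hf, hprop⟩ :=
    Stmt6.exists_coloring G hsym hana B' hmeas hmono huniq hcov'
  exact h2 ⟨f, hf, hprop⟩
end

section
/- For every c : ℕ → ℕ and every n ∈ ℕ, the graph L^c_n is a finite path; for n > 0 its two endpoints (vertices of degree 1) are e_i^n = (p_0)^⌢(0)^{n−1}⌢(i) for i < 2; and every vertex of L^c_n is of the form (p_k)^⌢t for some k ∈ ℕ and some binary string t of length at most n. -/
open MeasureTheory

/-- The endpoint `e_i^n = (p_0)^⌢(0)^{n-1}⌢(i)` of the finite path `L^c_n`
(vertices of `L^c_n` are coded as lists of naturals, the head being the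
index `k` of `p_k` and the tail being a binary string). -/
def pathEnd : ℕ → ℕ → List ℕ
  | 0, _ => [0]
  | m + 1, i => 0 :: (List.replicate m 0 ++ [i])

/-- The vertex set of the finite path `L^c_n`. -/
def LVerts (c : ℕ → ℕ) : ℕ → Set (List ℕ)
  | 0 => {[0]}
  | n + 1 =>
      ((fun v => v ++ [0]) '' LVerts c n) ∪ ((fun v => v ++ [1]) '' LVerts c n) ∪
        {v | ∃ k ≤ c n, v = [k]}

/-- The edge set of the finite path `L^c_n` (as a set of ordered pairs,
one orientation for each edge): `L^c_{n+1}` consists of two relabelled copies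
of `L^c_n` joined by the path `(e_1^n)^⌢(0), p_0, …, p_{c(n)}, (e_1^n)^⌢(1)`. -/
def LEdges (c : ℕ → ℕ) : ℕ → Set (List ℕ × List ℕ)
  | 0 => ∅
  | n + 1 =>
      {e | ∃ u v, (u, v) ∈ LEdges c n ∧ ∃ i ≤ 1, e = (u ++ [i], v ++ [i])} ∪
      {(pathEnd n 1 ++ [0], [0]), ([c n], pathEnd n 1 ++ [1])} ∪
      {e | ∃ j, j < c n ∧ e = ([j], [j + 1])}

/-- The (symmetric) adjacency relation of `L^c_n`. -/
def LAdj (c : ℕ → ℕ) (n : ℕ) (u v : List ℕ) : Prop :=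
  (u, v) ∈ LEdges c n ∨ (v, u) ∈ LEdges c n

/-! The vertices of `L^c_{n+1}` can be listed in path order as: the first copy of `L^c_n` in its
path order (from `e_0^n` to `e_1^n`), then `p_0, …, p_{c(n)}`, then the second copy of `L^c_n` in
reverse order. By induction on `n` this list has no repetitions, runs from `e_0^n` to `e_1^n`,
and its consecutive pairs are exactly the edges: inside the two outer blocks they are the edges
of the copies, and the connecting path supplies the pairs inside the middle block together with
the two junctions. -/

namespace List

variable {α β : Type*}

theorem pair_infix_iff_getElem? {l : List α} {a b : α} :
    [a, b] <:+: l ↔ ∃ j, l[j]? = some a ∧ l[j + 1]? = some b := by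
  constructor
  · rintro ⟨s, t, rfl⟩
    exact ⟨s.length, by simp, by simp⟩
  · rintro ⟨j, ha, hb⟩
    induction l generalizing j with
    | nil => simp at ha
    | cons x l ih =>
      cases j with
      | zero =>
        obtain ⟨t, rfl⟩ : ∃ t, l = b :: t := by
          cases l with
          | nil => simp at hb
          | cons y t => simp_all
        obtain rfl : x = a := by simpa using ha
        exact infix_append_left (l₂ := t)
      | succ j => exact infix_cons (ih j ha hb)

theorem pair_infix_iff_getD {l : List α} {a b : α} (d : α) :
    [a, b] <:+: l ↔ ∃ j, j + 1 < l.length ∧ l.getD j d = a ∧ l.getD (j + 1) d = b := by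
  rw [pair_infix_iff_getElem?]
  refine exists_congr fun j => ⟨fun ⟨ha, hb⟩ => ?_, fun ⟨hj, ha, hb⟩ => ?_⟩
  · obtain ⟨hj, -⟩ := getElem?_eq_some_iff.mp hb
    simp_all [getD_eq_getElem?_getD]
  · simp_all [show j < l.length by omega]

theorem pair_infix_map_iff {f : α → β} {l : List α} {a b : β} :
    [a, b] <:+: l.map f ↔ ∃ a' b', [a', b'] <:+: l ∧ f a' = a ∧ f b' = b := by
  rw [infix_map_iff]
  constructor
  · rintro ⟨_ | ⟨a', _ | ⟨b', _ | _⟩⟩, h, he⟩ <;> simp at he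
    exact ⟨a', b', h, he.1.symm, he.2.symm⟩
  · rintro ⟨a', b', h, rfl, rfl⟩
    exact ⟨[a', b'], h, rfl⟩

theorem pair_infix_reverse_iff {l : List α} {a b : α} :
    [a, b] <:+: l.reverse ↔ [b, a] <:+: l := by
  rw [← reverse_infix, reverse_reverse]
  rfl

theorem pair_infix_append_iff {l₁ l₂ : List α} {a b : α} :
    [a, b] <:+: l₁ ++ l₂ ↔
      [a, b] <:+: l₁ ∨ [a, b] <:+: l₂ ∨ (l₁.getLast? = some a ∧ l₂.head? = some b) := by
  rw [infix_append_iff_ne_nil, ← singleton_suffix_iff_getLast?_eq_some,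
    ← singleton_prefix_iff_head?_eq_some]
  refine or_congr_right (or_congr_right ⟨?_, fun h => ⟨[a], [b], by simp, by simp, rfl, h⟩⟩)
  rintro ⟨_ | ⟨x, _ | ⟨y, _⟩⟩, r, h₁, h₂, he, hs, hp⟩
  · simp at h₁
  · obtain ⟨rfl, rfl⟩ : a = x ∧ [b] = r := by simpa using he
    exact ⟨hs, hp⟩
  · obtain ⟨-, -, -, rfl⟩ : a = x ∧ b = y ∧ _ = [] ∧ r = [] := by simpa using he
    simp at h₂

theorem pair_infix_range_iff {n a b : ℕ} :
    [a, b] <:+: range n ↔ a + 1 < n ∧ b = a + 1 := by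
  rw [pair_infix_iff_getElem?]
  constructor
  · rintro ⟨j, ha, hb⟩
    obtain ⟨hj, rfl⟩ := getElem?_eq_some_iff.mp hb
    rw [length_range] at hj
    rw [getElem?_range (by omega), Option.some.injEq] at ha
    simp [← ha, hj]
  · rintro ⟨h, rfl⟩
    exact ⟨a, getElem?_range (by omega), getElem?_range h⟩

theorem Nodup.getD_inj {l : List α} (hl : l.Nodup) (d : α) {i j : ℕ} (hi : i < l.length)
    (hj : j < l.length) (h : l.getD i d = l.getD j d) : i = j := by
  rw [getD_eq_getElem _ _ hi, getD_eq_getElem _ _ hj] at h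
  exact hl.getElem_inj_iff.mp h

theorem mem_iff_exists_getD {l : List α} {a : α} (d : α) :
    a ∈ l ↔ ∃ j < l.length, a = l.getD j d := by
  rw [mem_iff_getElem]
  refine exists_congr fun j => ⟨fun ⟨hj, h⟩ => ⟨hj, by rw [getD_eq_getElem _ _ hj, h]⟩,
    fun ⟨hj, h⟩ => ⟨hj, by rw [h, getD_eq_getElem _ _ hj]⟩⟩

theorem pair_infix_or_pair_infix_iff_getD {l : List α} {a b : α} (d : α) :
    ([a, b] <:+: l ∨ [b, a] <:+: l) ↔ ∃ j, j < l.length - 1 ∧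
      ((a = l.getD j d ∧ b = l.getD (j + 1) d) ∨ (a = l.getD (j + 1) d ∧ b = l.getD j d)) := by
  rw [pair_infix_iff_getD d, pair_infix_iff_getD d, ← exists_or]
  refine exists_congr fun j => ?_
  grind

end List

open List

def LPath (c : ℕ → ℕ) : ℕ → List (List ℕ)
  | 0 => [[0]]
  | n + 1 =>
      (LPath c n).map (· ++ [0]) ++
        ((range (c n + 1)).map ([·]) ++ ((LPath c n).map (· ++ [1])).reverse)

theorem pathEnd_succ (n i : ℕ) : pathEnd (n + 1) i = pathEnd n 0 ++ [i] := by
  cases n <;> simp [pathEnd, replicate_succ']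

theorem head?_LPath (c : ℕ → ℕ) (n : ℕ) : (LPath c n).head? = some (pathEnd n 0) := by
  induction n with
  | zero => rfl
  | succ n ih => simp [LPath, head?_append, ih, pathEnd_succ]

theorem getLast?_LPath (c : ℕ → ℕ) (n : ℕ) : (LPath c n).getLast? = some (pathEnd n 1) := by
  cases n with
  | zero => rfl
  | succ n => simp [LPath, getLast?_append, head?_LPath, pathEnd_succ]

theorem LVerts_eq_setOf_mem_LPath (c : ℕ → ℕ) (n : ℕ) : LVerts c n = {v | v ∈ LPath c n} := by
  induction n with
  | zero => ext; simp [LVerts, LPath]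
  | succ n ih =>
    ext v
    simp only [LVerts, LPath, ih, Set.mem_union, Set.mem_image, Set.mem_ofPred_eq, mem_append,
      mem_map, mem_reverse, mem_range, Nat.lt_succ_iff]
    rw [or_assoc, or_comm (a := ∃ x ∈ LPath c n, x ++ [1] = v)]
    simp only [eq_comm (a := v)]

theorem exists_eq_cons_of_mem_LPath {c : ℕ → ℕ} {n : ℕ} {v : List ℕ} (hv : v ∈ LPath c n) :
    ∃ (k : ℕ) (t : List ℕ), t.length ≤ n ∧ (∀ a ∈ t, a ≤ 1) ∧ v = k :: t := by
  induction n generalizing v with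
  | zero => exact ⟨0, [], le_rfl, by simp, by simpa [LPath] using hv⟩
  | succ n ih =>
    simp only [LPath, mem_append, mem_map, mem_reverse, mem_range] at hv
    rcases hv with ⟨w, hw, rfl⟩ | ⟨k, -, rfl⟩ | ⟨w, hw, rfl⟩
    · obtain ⟨k, t, ht, hbin, rfl⟩ := ih hw
      exact ⟨k, t ++ [0], by simpa, forall_mem_append.mpr ⟨hbin, by simp⟩, rfl⟩
    · exact ⟨k, [], by simp, by simp, rfl⟩
    · obtain ⟨k, t, ht, hbin, rfl⟩ := ih hw
      exact ⟨k, t ++ [1], by simpa, forall_mem_append.mpr ⟨hbin, by simp⟩, rfl⟩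

theorem nodup_LPath (c : ℕ → ℕ) (n : ℕ) : (LPath c n).Nodup := by
  induction n with
  | zero => simp [LPath]
  | succ n ih =>
    have hne : ∀ v ∈ LPath c n, v ≠ [] := fun v hv => by
      obtain ⟨k, t, -, -, rfl⟩ := exists_eq_cons_of_mem_LPath hv
      exact cons_ne_nil k t
    refine (ih.map (append_left_injective _)).append
      ((nodup_range.map fun _ _ => List.singleton_inj.mp).append
        (nodup_reverse.mpr (ih.map (append_left_injective _))) ?_) ?_
    · simp only [disjoint_left, mem_map, mem_reverse, mem_range, not_exists, not_and]
      rintro _ ⟨j, -, rfl⟩ w hw h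
      exact hne w hw (by simpa using congrArg length h)
    · simp only [disjoint_left, mem_append, mem_map, mem_reverse, mem_range, not_or, not_exists,
        not_and]
      rintro _ ⟨w, hw, rfl⟩
      refine ⟨fun j _ h => hne w hw (by simpa using congrArg length h), fun w' _ h => ?_⟩
      simpa using congrArg getLast? h

theorem pair_infix_LPath_succ_iff {c : ℕ → ℕ} {n : ℕ} {u v : List ℕ} :
    [u, v] <:+: LPath c (n + 1) ↔
      (∃ a b, [a, b] <:+: LPath c n ∧ u = a ++ [0] ∧ v = b ++ [0]) ∨
      (∃ j < c n, u = [j] ∧ v = [j + 1]) ∨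
      (∃ a b, [a, b] <:+: LPath c n ∧ u = b ++ [1] ∧ v = a ++ [1]) ∨
      (u = pathEnd n 1 ++ [0] ∧ v = [0]) ∨ (u = [c n] ∧ v = pathEnd n 1 ++ [1]) := by
  simp only [LPath, pair_infix_append_iff, pair_infix_map_iff, pair_infix_reverse_iff,
    pair_infix_range_iff, getLast?_map, getLast?_LPath, head?_append, head?_map, head?_reverse,
    head?_range, getLast?_range, Nat.add_one_ne_zero, if_false, Nat.add_sub_cancel, Option.map_some,
    Option.some_or, Option.some.injEq]
  aesop

theorem LAdj_comm {c : ℕ → ℕ} {n : ℕ} {u v : List ℕ} : LAdj c n u v ↔ LAdj c n v u :=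
  or_comm

theorem LAdj.append_singleton {c : ℕ → ℕ} {n : ℕ} {a b : List ℕ} (h : LAdj c n a b) {i : ℕ}
    (hi : i ≤ 1) : LAdj c (n + 1) (a ++ [i]) (b ++ [i]) := by
  rcases h with h | h
  · exact Or.inl (Or.inl (Or.inl ⟨a, b, h, i, hi, rfl⟩))
  · exact Or.inr (Or.inl (Or.inl ⟨b, a, h, i, hi, rfl⟩))

theorem LAdj_succ_of_pair_infix {c : ℕ → ℕ} {n : ℕ}
    (ih : ∀ a b, [a, b] <:+: LPath c n → LAdj c n a b) {u v : List ℕ}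
    (h : [u, v] <:+: LPath c (n + 1)) : LAdj c (n + 1) u v := by
  rcases pair_infix_LPath_succ_iff.mp h with ⟨a, b, hab, rfl, rfl⟩ | ⟨j, hj, rfl, rfl⟩ |
    ⟨a, b, hab, rfl, rfl⟩ | ⟨rfl, rfl⟩ | ⟨rfl, rfl⟩
  · exact (ih a b hab).append_singleton zero_le_one
  · exact Or.inl (Or.inr ⟨j, hj, rfl⟩)
  · exact LAdj_comm.mp ((ih a b hab).append_singleton le_rfl)
  · exact Or.inl (Or.inl (Or.inr (Or.inl rfl)))
  · exact Or.inl (Or.inl (Or.inr (Or.inr rfl)))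

theorem pair_infix_LPath_succ_of_mem_LEdges_succ {c : ℕ → ℕ} {n : ℕ}
    (ih : ∀ a b, (a, b) ∈ LEdges c n → [a, b] <:+: LPath c n ∨ [b, a] <:+: LPath c n)
    {u v : List ℕ} (h : (u, v) ∈ LEdges c (n + 1)) :
    [u, v] <:+: LPath c (n + 1) ∨ [v, u] <:+: LPath c (n + 1) := by
  simp only [LEdges, Set.mem_union, Set.mem_ofPred_eq, Set.mem_insert_iff, Set.mem_singleton_iff,
    Prod.mk.injEq] at h
  simp only [pair_infix_LPath_succ_iff]
  rcases h with ((⟨a, b, hab, i, hi, rfl, rfl⟩ | ⟨rfl, rfl⟩ | ⟨rfl, rfl⟩) | ⟨j, hj, rfl, rfl⟩)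
  · obtain rfl | rfl : i = 0 ∨ i = 1 := by omega
    · rcases ih a b hab with h | h
      · exact Or.inl (Or.inl ⟨a, b, h, rfl, rfl⟩)
      · exact Or.inr (Or.inl ⟨b, a, h, rfl, rfl⟩)
    · rcases ih a b hab with h | h
      · exact Or.inr (Or.inr (Or.inr (Or.inl ⟨a, b, h, rfl, rfl⟩)))
      · exact Or.inl (Or.inr (Or.inr (Or.inl ⟨b, a, h, rfl, rfl⟩)))
  · exact Or.inl (Or.inr (Or.inr (Or.inr (Or.inl ⟨rfl, rfl⟩))))
  · exact Or.inl (Or.inr (Or.inr (Or.inr (Or.inr ⟨rfl, rfl⟩))))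
  · exact Or.inl (Or.inr (Or.inl ⟨j, hj, rfl, rfl⟩))

theorem LAdj_iff_pair_infix (c : ℕ → ℕ) (n : ℕ) (u v : List ℕ) :
    LAdj c n u v ↔ [u, v] <:+: LPath c n ∨ [v, u] <:+: LPath c n := by
  induction n generalizing u v with
  | zero =>
    simp only [LAdj, LEdges, Set.mem_empty_iff_false, or_self, false_iff, not_or]
    constructor <;> exact fun h => absurd h.length_le (by simp [LPath])
  | succ n ih =>
    have of_edge {u v : List ℕ} (h : (u, v) ∈ LEdges c (n + 1)) :=
      pair_infix_LPath_succ_of_mem_LEdges_succ (fun a b hab => (ih a b).mp (Or.inl hab)) h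
    have of_pair {u v : List ℕ} (h : [u, v] <:+: LPath c (n + 1)) :=
      LAdj_succ_of_pair_infix (fun a b hab => (ih a b).mpr (Or.inl hab)) h
    constructor
    · rintro (h | h)
      exacts [of_edge h, (of_edge h).symm]
    · rintro (h | h)
      exacts [of_pair h, LAdj_comm.mp (of_pair h)]

/-- For every `c : ℕ → ℕ` and `n`, the graph `L^c_n` is a finite path: its
vertices can be enumerated as `w 0, …, w m` with adjacency exactly between
consecutive vertices; for `n > 0` its endpoints are
`e_i^n = (p_0)^⌢(0)^{n-1}⌢(i)`, `i < 2`; and every vertex is of the form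
`(p_k)^⌢t` for some `k` and binary string `t` of length at most `n`. -/
theorem stmt8 (c : ℕ → ℕ) (n : ℕ) :
    (∃ (m : ℕ) (w : ℕ → List ℕ),
      (∀ i ≤ m, ∀ j ≤ m, w i = w j → i = j) ∧
      LVerts c n = {v | ∃ j ≤ m, v = w j} ∧
      (∀ u v, LAdj c n u v ↔
        ∃ j, j < m ∧ ((u = w j ∧ v = w (j + 1)) ∨ (u = w (j + 1) ∧ v = w j))) ∧
      (0 < n → ({w 0, w m} : Set (List ℕ)) = {pathEnd n 0, pathEnd n 1})) ∧
    (∀ v ∈ LVerts c n, ∃ (k : ℕ) (t : List ℕ),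
      t.length ≤ n ∧ (∀ a ∈ t, a ≤ 1) ∧ v = k :: t) := by
  have hL : 0 < (LPath c n).length :=
    length_pos_iff_exists_mem.mpr ⟨_, mem_of_mem_head? (head?_LPath c n)⟩
  refine ⟨⟨(LPath c n).length - 1, ((LPath c n).getD · []),
      fun i hi j hj => (nodup_LPath c n).getD_inj [] (by omega) (by omega), ?_, fun u v => ?_,
      fun _ => ?_⟩,
    fun v hv => exists_eq_cons_of_mem_LPath (by rwa [LVerts_eq_setOf_mem_LPath] at hv)⟩
  · ext v
    simp only [LVerts_eq_setOf_mem_LPath, Set.mem_ofPred_eq, mem_iff_exists_getD []]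
    exact exists_congr fun j => and_congr_left' (Nat.lt_iff_le_pred hL)
  · rw [LAdj_iff_pair_infix, pair_infix_or_pair_infix_iff_getD []]
  · simp [getD_eq_getElem?_getD, ← head?_eq_getElem?, ← getLast?_eq_getElem?, head?_LPath,
      getLast?_LPath]
end

section
/- Let G be an analytic graph on a Polish space X with witnessing Polish space E and continuous π : E → X × X whose image is the edge set of G, let H be a finite graph, let u and v be vertices of H at graph distance d in H, let F ⊆ Hom(H, G) and k ∈ ℕ. If Φ(F(u), k), then Φ(F(v), max(0, k − d)). In particular, for F ⊆ Hom(L^d_{n+1}, G) and a joining-path vertex p_j (which is at distance j+1 from the endpoint vertex (e_1^n)^⌢(0)), Φ(F(p_j), k) implies Φ(F((e_1^n)^⌢(0)), max(0, k − j − 1)). -/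
open MeasureTheory

/-- `Hom(H,G)` for a graph `H` with edge set `ES` (vertices coded as lists of
naturals): pairs of a vertex map into `X` and an edge map into `E` such that
`π` of the image of an edge is the pair of images of its endpoints. -/
def HomSet {X E : Type*} (π : E → X × X) (ES : Set (List ℕ × List ℕ)) :
    Set ((List ℕ → X) × ((List ℕ × List ℕ) → E)) :=
  {φ | ∀ e ∈ ES, π (φ.2 e) = (φ.1 e.1, φ.1 e.2)}

/-- `S(u) = {φ(u) : φ ∈ S}`. -/
def vertexImage {X E : Type*} (u : List ℕ)
    (S : Set ((List ℕ → X) × ((List ℕ × List ℕ) → E))) : Set X :=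
  (fun φ => φ.1 u) '' S

/-- `S` is small (w.r.t. the vertex set `VS`): it is covered by countably many
tiny Borel sets, where a Borel set `F` is tiny if `Φ(F(u), k)` holds for some
vertex `u ∈ VS` and some `k`. -/
def SmallSet {X E : Type*} [MeasurableSpace X] [MeasurableSpace E] (G : X → X → Prop)
    (VS : Set (List ℕ)) (S : Set ((List ℕ → X) × ((List ℕ × List ℕ) → E))) : Prop :=
  ∃ F : ℕ → Set ((List ℕ → X) × ((List ℕ × List ℕ) → E)),
    (∀ m, MeasurableSet (F m) ∧ ∃ u ∈ VS, ∃ k, PhiProp G (vertexImage u (F m)) k) ∧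
      S ⊆ ⋃ m, F m

/-- `φ^i`: the restriction of `φ ∈ Hom(L^c_{n+1},G)` to the `i`-th copy of
`L^c_n` inside `L^c_{n+1}`. -/
def restrictHom {X E : Type*} (i : ℕ) (φ : (List ℕ → X) × ((List ℕ × List ℕ) → E)) :
    (List ℕ → X) × ((List ℕ × List ℕ) → E) :=
  (fun u => φ.1 (u ++ [i]), fun e => φ.2 (e.1 ++ [i], e.2 ++ [i]))

/-- `S^{+d}`: all `φ ∈ Hom(L^d_{n+1},G)` with `φ^0 ∈ S` and `φ^1 ∈ S`. -/
def plusSet {X E : Type*} (π : E → X × X) (d : ℕ → ℕ) (n : ℕ)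
    (S : Set ((List ℕ → X) × ((List ℕ × List ℕ) → E))) :
    Set ((List ℕ → X) × ((List ℕ × List ℕ) → E)) :=
  {φ | φ ∈ HomSet π (LEdges d (n + 1)) ∧ restrictHom 0 φ ∈ S ∧ restrictHom 1 φ ∈ S}

lemma phi_transfer {X E : Type} (G : X → X → Prop) (hsym : Symmetric G)
    (π : E → X × X)
    (hrange : ∀ x y, G x y ↔ (x, y) ∈ Set.range π)
    (ES : Set (List ℕ × List ℕ)) (u v : List ℕ) (d : ℕ)
    (hd : d ∈ walkLens (fun a b => (a, b) ∈ ES ∨ (b, a) ∈ ES) u v)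
    (F : Set ((List ℕ → X) × ((List ℕ × List ℕ) → E)))
    (hF : F ⊆ HomSet π ES) (k : ℕ)
    (hk : PhiProp G (vertexImage u F) k) :
    PhiProp G (vertexImage v F) (k - d) := by
  obtain ⟨p, hp0, hpd, hp⟩ := hd
  intro m w hodd hw hw0 hwm
  obtain ⟨φ₁, hφ₁F, hφ₁⟩ := hw0
  obtain ⟨φ₂, hφ₂F, hφ₂⟩ := hwm
  -- each φ maps H-edges to G-edges
  have hedge : ∀ φ ∈ F, ∀ a b : List ℕ, ((a, b) ∈ ES ∨ (b, a) ∈ ES) →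
      G (φ.1 a) (φ.1 b) := by
    intro φ hφ a b hab
    rcases hab with h | h
    · have := hF hφ (a, b) h
      rw [hrange]
      exact ⟨φ.2 (a, b), this⟩
    · apply hsym
      have := hF hφ (b, a) h
      rw [hrange]
      exact ⟨φ.2 (b, a), this⟩
  -- build the extended walk of length m + 2d
  set W : ℕ → X := fun i =>
    if i < d then φ₁.1 (p i)
    else if i ≤ d + m then w (i - d)
    else φ₂.1 (p (2 * d + m - i)) with hW
  have hW0 : W 0 = φ₁.1 u := by
    by_cases h : 0 < d
    · simp [hW, h, hp0]
    · have hd0 : d = 0 := by omega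
      have huv : u = v := hp0.symm.trans (hd0 ▸ hpd)
      simp [hW, hd0, huv, ← hφ₁]
  have hWend : W (m + 2 * d) = φ₂.1 u := by
    by_cases h : d = 0
    · have huv : u = v := hp0.symm.trans (h ▸ hpd)
      simp [hW, h, huv, ← hφ₂]
    · have h1 : ¬ (m + 2 * d < d) := by omega
      have h2 : ¬ (m + 2 * d ≤ d + m) := by omega
      have h3 : 2 * d + m - (m + 2 * d) = 0 := by omega
      simp [hW, h1, h2, h3, hp0]
  have hWwalk : IsWalk G (m + 2 * d) W := by
    intro j hj
    rcases lt_or_ge (j + 1) d with h1 | h1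
    · -- both in first segment
      have hj' : j < d := by omega
      simp only [hW, if_pos hj', if_pos h1]
      exact hedge φ₁ hφ₁F _ _ (hp j hj')
    rcases lt_or_ge j d with h2 | h2
    · -- j < d ≤ j+1, so j+1 = d
      have hjd : j + 1 = d := by omega
      have h3 : d ≤ d + m := by omega
      simp only [hW, if_pos h2, if_neg (by omega : ¬ j + 1 < d), if_pos (by omega : j + 1 ≤ d + m)]
      have : w (j + 1 - d) = φ₁.1 (p (j + 1)) := by
        rw [hjd]; simp [← hφ₁, hpd]
      rw [this]
      exact hedge φ₁ hφ₁F _ _ (hp j h2)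
    rcases lt_or_ge (j + 1) (d + m + 1) with h3 | h3
    · -- middle segment: d ≤ j, j+1 ≤ d + m
      simp only [hW, if_neg (by omega : ¬ j < d), if_pos (by omega : j ≤ d + m),
        if_neg (by omega : ¬ j + 1 < d), if_pos (by omega : j + 1 ≤ d + m)]
      have : j + 1 - d = (j - d) + 1 := by omega
      rw [this]
      exact hw (j - d) (by omega)
    · -- last segment: d + m ≤ j
      have hjm : d + m ≤ j := by omega
      have hWj : W j = φ₂.1 (p (2 * d + m - j)) := by
        rcases eq_or_lt_of_le hjm with he | hl
        · have : 2 * d + m - j = d := by omega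
          simp only [hW, if_neg (by omega : ¬ j < d), if_pos (by omega : j ≤ d + m), this]
          rw [← he]
          simp [← hφ₂, hpd]
        · simp only [hW, if_neg (by omega : ¬ j < d), if_neg (by omega : ¬ j ≤ d + m)]
      have hWj1 : W (j + 1) = φ₂.1 (p (2 * d + m - (j + 1))) := by
        simp only [hW, if_neg (by omega : ¬ j + 1 < d), if_neg (by omega : ¬ j + 1 ≤ d + m)]
      rw [hWj, hWj1]
      set t := 2 * d + m - (j + 1) with ht
      have htd : t < d := by omega
      have : 2 * d + m - j = t + 1 := by omega
      rw [this]
      exact hsym (hedge φ₂ hφ₂F _ _ (hp t htd))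
  have hmem0 : W 0 ∈ vertexImage u F := by
    rw [hW0]; exact ⟨φ₁, hφ₁F, rfl⟩
  have hmemend : W (m + 2 * d) ∈ vertexImage u F := by
    rw [hWend]; exact ⟨φ₂, hφ₂F, rfl⟩
  have hoddW : Odd (m + 2 * d) := by
    obtain ⟨t, ht⟩ := hodd
    exact ⟨t + d, by omega⟩
  have := hk (m + 2 * d) W hoddW hWwalk hmem0 hmemend
  obtain ⟨t, ht⟩ := hodd
  omega

/-- If `u, v` are vertices of a finite graph `H` at graph distance `dH` and
`F ⊆ Hom(H,G)` satisfies `Φ(F(u), k)`, then `Φ(F(v), k - dH)` (truncated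
subtraction realizes `max (0, k - dH)`). In particular (second conjunct),
for `F' ⊆ Hom(L^c_{n+1}, G)` and a joining-path vertex `p_j` (at distance
`j+1` from the endpoint `(e_1^n)^⌢(0)`), `Φ(F'(p_j), k')` implies
`Φ(F'((e_1^n)^⌢(0)), k' - (j+1))`. -/
theorem stmt12 {X E : Type} [TopologicalSpace X] [PolishSpace X]
    [MeasurableSpace X] [BorelSpace X]
    [TopologicalSpace E] [PolishSpace E] [MeasurableSpace E] [BorelSpace E]
    (G : X → X → Prop) (hsym : Symmetric G) (hirr : Irreflexive G)
    (π : E → X × X) (hπ : Continuous π)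
    (hrange : ∀ x y, G x y ↔ (x, y) ∈ Set.range π)
    (VH : Set (List ℕ)) (EH : Set (List ℕ × List ℕ)) (hVfin : VH.Finite)
    (hEsub : ∀ e ∈ EH, e.1 ∈ VH ∧ e.2 ∈ VH)
    (u v : List ℕ) (hu : u ∈ VH) (hv : v ∈ VH) (dH : ℕ)
    (hdwalk : dH ∈ walkLens (fun a b => (a, b) ∈ EH ∨ (b, a) ∈ EH) u v)
    (hdmin : ∀ m ∈ walkLens (fun a b => (a, b) ∈ EH ∨ (b, a) ∈ EH) u v, dH ≤ m)
    (F : Set ((List ℕ → X) × ((List ℕ × List ℕ) → E)))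
    (hF : F ⊆ HomSet π EH) (k : ℕ) (hk : PhiProp G (vertexImage u F) k) :
    PhiProp G (vertexImage v F) (k - dH) ∧
    ∀ (c : ℕ → ℕ) (n j : ℕ), j ≤ c n →
      ∀ F' ⊆ HomSet π (LEdges c (n + 1)), ∀ k',
        PhiProp G (vertexImage [j] F') k' →
        PhiProp G (vertexImage (pathEnd n 1 ++ [0]) F') (k' - (j + 1)) := by
  constructor
  · exact phi_transfer G hsym π hrange EH u v dH hdwalk F hF k hk
  · intro c n j hj F' hF' k' hk'
    apply phi_transfer G hsym π hrange (LEdges c (n + 1)) [j] (pathEnd n 1 ++ [0]) (j + 1)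
      _ F' hF' k' hk'
    refine ⟨fun i => if i ≤ j then [j - i] else pathEnd n 1 ++ [0], by simp, by simp, ?_⟩
    intro i hi
    rcases lt_or_ge i j with h | h
    · simp only [if_pos (by omega : i ≤ j), if_pos (by omega : i + 1 ≤ j)]
      right
      show _ ∈ LEdges c (n + 1)
      refine Or.inr ⟨j - (i + 1), by omega, ?_⟩
      have : j - (i + 1) + 1 = j - i := by omega
      rw [this]
    · have hij : i = j := by omega
      simp only [hij, if_pos (le_refl j), if_neg (by omega : ¬ j + 1 ≤ j), Nat.sub_self]
      right
      show _ ∈ LEdges c (n + 1)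
      exact Or.inl (Or.inr (Or.inl rfl))
end

section
/- Let c : ℕ → ℕ. The graph 𝕃_c has no cycles, and every vertex of 𝕃_c has degree 2 except for the vertex (0,0,0^ω) (where 0^ω is the constant-zero sequence), which has degree 1. -/
open MeasureTheory

/-- The Polish space `X_c ⊆ ℕ × ℕ × 2^ℕ` of vertices of `𝕃_c`. -/
def Xc (c : ℕ → ℕ) : Set (ℕ × ℕ × (ℕ → Bool)) :=
  {p | (p.1 = 0 ∧ p.2.1 = 0) ∨ (1 ≤ p.1 ∧ p.2.1 ≤ c (p.1 - 1))}

/-- `π_n(m,k,x) = (p_k)^⌢(x↾(n-m))`, a vertex of `L^c_n` (for `n ≥ m`). -/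
def piProj (m k : ℕ) (x : ℕ → Bool) (n : ℕ) : List ℕ :=
  k :: List.ofFn (fun j : Fin (n - m) => cond (x j.val) 1 0)

/-- Adjacency in `𝕃_c`: the projections are adjacent in `L^c_n` for every
`n ≥ max` of the first coordinates. -/
def LcAdj (c : ℕ → ℕ) (p q : ℕ × ℕ × (ℕ → Bool)) : Prop :=
  ∀ n, max p.1 q.1 ≤ n → LAdj c n (piProj p.1 p.2.1 p.2.2 n) (piProj q.1 q.2.1 q.2.2 n)

/-- Concatenation `t^⌢x` of a finite binary string with an infinite one. -/
def catSeq (t : List Bool) (x : ℕ → Bool) : ℕ → Bool :=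
  fun j => if h : j < t.length then t.get ⟨j, h⟩ else x (j - t.length)
-- ===== auxiliary development =====
namespace Stmt14Aux

variable (c : ℕ → ℕ)

/-- length of the path `L^c_n` (number of edges) -/
def len : ℕ → ℕ
  | 0 => 0
  | n + 1 => 2 * len n + c n + 2

/-- position of a vertex along the path `L^c_n` -/
def pos : ℕ → List ℕ → ℕ
  | 0, _ => 0
  | n + 1, l =>
      if l.length ≤ 1 then len c n + 1 + l.headI
      else if l.getLast? = some 0 then pos n l.dropLast
      else len c (n + 1) - pos n l.dropLast

lemma len_succ (n : ℕ) : len c (n + 1) = 2 * len c n + c n + 2 := rfl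

lemma pos_single (n k : ℕ) : pos c (n + 1) [k] = len c n + 1 + k := by
  simp [pos]

lemma pos_append_zero (n : ℕ) {a : List ℕ} (ha : a ≠ []) :
    pos c (n + 1) (a ++ [0]) = pos c n a := by
  have h1 : ¬ (a ++ [0]).length ≤ 1 := by
    simp [List.length_append]
    cases a with
    | nil => exact absurd rfl ha
    | cons b t => simp
  simp [pos, h1, ha, List.getLast?_concat, List.dropLast_concat]

lemma pos_append_one (n : ℕ) {a : List ℕ} (ha : a ≠ []) :
    pos c (n + 1) (a ++ [1]) = len c (n + 1) - pos c n a := by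
  have h1 : ¬ (a ++ [1]).length ≤ 1 := by
    simp [List.length_append]
    cases a with
    | nil => exact absurd rfl ha
    | cons b t => simp
  simp [pos, h1, ha, List.getLast?_concat, List.dropLast_concat]

lemma verts_cases {n : ℕ} {u : List ℕ} (h : u ∈ LVerts c (n + 1)) :
    (∃ a ∈ LVerts c n, u = a ++ [0]) ∨ (∃ a ∈ LVerts c n, u = a ++ [1]) ∨
      ∃ k ≤ c n, u = [k] := by
  rcases h with (⟨a, ha, rfl⟩ | ⟨a, ha, rfl⟩) | ⟨k, hk, rfl⟩
  · exact Or.inl ⟨a, ha, rfl⟩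
  · exact Or.inr (Or.inl ⟨a, ha, rfl⟩)
  · exact Or.inr (Or.inr ⟨k, hk, rfl⟩)

lemma verts_ne_nil : ∀ {n : ℕ} {u : List ℕ}, u ∈ LVerts c n → u ≠ []
  | 0, u, h => by simp only [LVerts] at h; subst h; simp
  | n + 1, u, h => by
      rcases verts_cases c h with ⟨a, _, rfl⟩ | ⟨a, _, rfl⟩ | ⟨k, _, rfl⟩ <;> simp

lemma pos_le_len : ∀ {n : ℕ} {u : List ℕ}, u ∈ LVerts c n → pos c n u ≤ len c n
  | 0, u, _ => by simp [pos, len]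
  | n + 1, u, h => by
      rcases verts_cases c h with ⟨a, ha, rfl⟩ | ⟨a, ha, rfl⟩ | ⟨k, hk, rfl⟩
      · rw [pos_append_zero c n (verts_ne_nil c ha)]
        have := pos_le_len ha
        rw [len_succ]; omega
      · rw [pos_append_one c n (verts_ne_nil c ha)]; omega
      · rw [pos_single, len_succ]; omega

end Stmt14Aux

namespace Stmt14Aux
variable (c : ℕ → ℕ)

lemma pathEnd_succ (n i : ℕ) : pathEnd (n + 1) i = pathEnd n 0 ++ [i] := by
  cases n with
  | zero => rfl
  | succ m => simp [pathEnd, List.replicate_succ']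

lemma pathEnd_ne_nil (n i : ℕ) : pathEnd n i ≠ [] := by
  cases n <;> simp [pathEnd]

lemma pathEnd_mem (n : ℕ) : ∀ i ≤ 1, pathEnd n i ∈ LVerts c n := by
  induction n with
  | zero => intro i _; simp [pathEnd, LVerts]
  | succ n ih =>
      intro i hi
      rw [pathEnd_succ]
      interval_cases i
      · exact Or.inl (Or.inl ⟨pathEnd n 0, ih 0 (by norm_num), rfl⟩)
      · exact Or.inl (Or.inr ⟨pathEnd n 0, ih 0 (by norm_num), rfl⟩)

lemma pos_pathEnd_zero (n : ℕ) : pos c n (pathEnd n 0) = 0 := by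
  induction n with
  | zero => rfl
  | succ n ih => rw [pathEnd_succ, pos_append_zero c n (pathEnd_ne_nil n 0), ih]

lemma pos_pathEnd_one (n : ℕ) : pos c n (pathEnd n 1) = len c n := by
  induction n with
  | zero => rfl
  | succ n _ =>
      rw [pathEnd_succ, pos_append_one c n (pathEnd_ne_nil n 0), pos_pathEnd_zero]
      omega

lemma pos_inj : ∀ {n : ℕ} {u v : List ℕ}, u ∈ LVerts c n → v ∈ LVerts c n →
    pos c n u = pos c n v → u = v
  | 0, u, v, hu, hv, _ => by
      simp only [LVerts] at hu hv; rw [hu, hv]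
  | n + 1, u, v, hu, hv, hp => by
      have L1 := len_succ c n
      rcases verts_cases c hu with ⟨a, ha, rfl⟩ | ⟨a, ha, rfl⟩ | ⟨k, hk, rfl⟩ <;>
        rcases verts_cases c hv with ⟨b, hb, rfl⟩ | ⟨b, hb, rfl⟩ | ⟨k', hk', rfl⟩ <;>
          [skip; skip; skip; skip; skip; skip; skip; skip; skip] <;>
        first
        | (rw [pos_append_zero c n (verts_ne_nil c ha),
              pos_append_zero c n (verts_ne_nil c hb)] at hp
           rw [pos_inj ha hb hp])
        | (rw [pos_append_one c n (verts_ne_nil c ha),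
              pos_append_one c n (verts_ne_nil c hb)] at hp
           have h1 := pos_le_len c ha
           have h2 := pos_le_len c hb
           rw [pos_inj ha hb (by omega)])
        | (exfalso
           first
           | (rw [pos_append_zero c n (verts_ne_nil c ha), pos_single] at hp
              have h1 := pos_le_len c ha; omega)
           | (rw [pos_single, pos_append_zero c n (verts_ne_nil c hb)] at hp
              have h1 := pos_le_len c hb; omega)
           | (rw [pos_append_zero c n (verts_ne_nil c ha),
                 pos_append_one c n (verts_ne_nil c hb)] at hp
              have h1 := pos_le_len c ha; have h2 := pos_le_len c hb; omega)
           | (rw [pos_append_one c n (verts_ne_nil c ha),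
                 pos_append_zero c n (verts_ne_nil c hb)] at hp
              have h1 := pos_le_len c ha; have h2 := pos_le_len c hb; omega)
           | (rw [pos_append_one c n (verts_ne_nil c ha), pos_single] at hp
              have h1 := pos_le_len c ha; omega)
           | (rw [pos_single, pos_append_one c n (verts_ne_nil c hb)] at hp
              have h2 := pos_le_len c hb; omega))
        | (rw [pos_single, pos_single] at hp
           have : k = k' := by omega
           rw [this])

end Stmt14Aux

namespace Stmt14Aux
variable (c : ℕ → ℕ)

lemma edges_spec : ∀ {n : ℕ} {u v : List ℕ}, (u, v) ∈ LEdges c n →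
    u ∈ LVerts c n ∧ v ∈ LVerts c n ∧
      (pos c n u + 1 = pos c n v ∨ pos c n v + 1 = pos c n u)
  | 0, u, v, h => by simp [LEdges] at h
  | n + 1, u, v, h => by
      have L1 := len_succ c n
      rcases h with (⟨a, b, hab, i, hi, he⟩ | h) | ⟨j, hj, he⟩
      · obtain ⟨h1, h2⟩ := Prod.ext_iff.mp he
        simp only at h1 h2; subst h1; subst h2
        obtain ⟨ha, hb, hp⟩ := edges_spec hab
        have hla := pos_le_len c ha
        have hlb := pos_le_len c hb
        interval_cases i
        · refine ⟨Or.inl (Or.inl ⟨a, ha, rfl⟩), Or.inl (Or.inl ⟨b, hb, rfl⟩), ?_⟩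
          rw [pos_append_zero c n (verts_ne_nil c ha),
            pos_append_zero c n (verts_ne_nil c hb)]
          exact hp
        · refine ⟨Or.inl (Or.inr ⟨a, ha, rfl⟩), Or.inl (Or.inr ⟨b, hb, rfl⟩), ?_⟩
          rw [pos_append_one c n (verts_ne_nil c ha),
            pos_append_one c n (verts_ne_nil c hb)]
          omega
      · rcases h with he | he <;> obtain ⟨h1, h2⟩ := Prod.ext_iff.mp he <;>
          simp only at h1 h2 <;> subst h1 <;> subst h2
        · refine ⟨Or.inl (Or.inl ⟨pathEnd n 1, pathEnd_mem c n 1 le_rfl, rfl⟩),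
            Or.inr ⟨0, Nat.zero_le _, rfl⟩, ?_⟩
          rw [pos_append_zero c n (pathEnd_ne_nil n 1), pos_pathEnd_one, pos_single]
          omega
        · refine ⟨Or.inr ⟨c n, le_rfl, rfl⟩,
            Or.inl (Or.inr ⟨pathEnd n 1, pathEnd_mem c n 1 le_rfl, rfl⟩), ?_⟩
          rw [pos_append_one c n (pathEnd_ne_nil n 1), pos_pathEnd_one, pos_single]
          omega
      · obtain ⟨h1, h2⟩ := Prod.ext_iff.mp he
        simp only at h1 h2; subst h1; subst h2
        refine ⟨Or.inr ⟨j, by omega, rfl⟩, Or.inr ⟨j + 1, by omega, rfl⟩, ?_⟩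
        rw [pos_single, pos_single]
        omega

end Stmt14Aux

namespace Stmt14Aux
variable (c : ℕ → ℕ)

lemma piProj_eq_map (m k : ℕ) (x : ℕ → Bool) (n : ℕ) :
    piProj m k x n = k :: (List.range (n - m)).map (fun j => cond (x j) 1 0) := by
  unfold piProj
  congr 1
  apply List.ext_getElem
  · simp
  · intro i h1 h2
    simp

lemma piProj_base (m k : ℕ) (x : ℕ → Bool) : piProj m k x m = [k] := by
  simp [piProj_eq_map]

lemma piProj_succ (m k : ℕ) (x : ℕ → Bool) {n : ℕ} (h : m ≤ n) :
    piProj m k x (n + 1) = piProj m k x n ++ [cond (x (n - m)) 1 0] := by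
  rw [piProj_eq_map, piProj_eq_map]
  have : n + 1 - m = (n - m) + 1 := by omega
  rw [this, List.range_succ]
  simp

lemma piProj_mem {p : ℕ × ℕ × (ℕ → Bool)} (hp : p ∈ Xc c) :
    ∀ n, p.1 ≤ n → piProj p.1 p.2.1 p.2.2 n ∈ LVerts c n := by
  intro n hn
  induction n, hn using Nat.le_induction with
  | base =>
      rw [piProj_base]
      rcases hp with ⟨h1, h2⟩ | ⟨h1, h2⟩
      · rw [h1, h2]; simp [LVerts]
      · match p, h1, h2 with
        | (t + 1, k, x), _, h2 =>
            exact Or.inr ⟨k, by simpa using h2, rfl⟩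
  | succ n hn ih =>
      rw [piProj_succ _ _ _ hn]
      cases hx : p.2.2 (n - p.1)
      · exact Or.inl (Or.inl ⟨_, ih, rfl⟩)
      · exact Or.inl (Or.inr ⟨_, ih, rfl⟩)

/-- if the projections agree cofinally, the points are equal -/
lemma eq_of_cofinal_proj {p q : ℕ × ℕ × (ℕ → Bool)}
    (h : ∀ M, ∃ n, M ≤ n ∧ piProj p.1 p.2.1 p.2.2 n = piProj q.1 q.2.1 q.2.2 n) :
    p = q := by
  obtain ⟨m, k, x⟩ := p
  obtain ⟨m', k', x'⟩ := q
  simp only at h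
  have hm : m = m' := by
    obtain ⟨n, hn, he⟩ := h (max m m')
    have := congrArg List.length he
    simp only [piProj_eq_map, List.length_cons, List.length_map, List.length_range] at this
    omega
  subst hm
  have hk : k = k' := by
    obtain ⟨n, _, he⟩ := h 0
    simpa [piProj_eq_map] using List.head_eq_of_cons_eq he
  subst hk
  have hx : x = x' := by
    funext j
    obtain ⟨n, hn, he⟩ := h (m + j + 1)
    rw [piProj_eq_map, piProj_eq_map] at he
    have ht := List.tail_eq_of_cons_eq he
    have hj : j < n - m := by omega
    have := List.map_inj_left.mp ht j (by simpa using hj)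
    cases hxj : x j <;> cases hxj' : x' j <;> simp_all
  rw [hx]

lemma sep_of_ne {p q : ℕ × ℕ × (ℕ → Bool)} (h : p ≠ q) :
    ∃ N, ∀ n, N ≤ n → piProj p.1 p.2.1 p.2.2 n ≠ piProj q.1 q.2.1 q.2.2 n := by
  by_contra hc
  push_neg at hc
  exact h (eq_of_cofinal_proj (fun M => by
    obtain ⟨n, hn, he⟩ := hc M
    exact ⟨n, hn, he⟩))

end Stmt14Aux

namespace Stmt14Aux
variable (c : ℕ → ℕ)

lemma edge_propagate {n : ℕ} {u v : List ℕ} (h : (u, v) ∈ LEdges c n)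
    {i : ℕ} (hi : i ≤ 1) : (u ++ [i], v ++ [i]) ∈ LEdges c (n + 1) :=
  Or.inl (Or.inl ⟨u, v, h, i, hi, rfl⟩)

lemma lcAdj_of_base {p q : ℕ × ℕ × (ℕ → Bool)} {n₀ : ℕ}
    (hm : max p.1 q.1 = n₀)
    (hedge : (piProj p.1 p.2.1 p.2.2 n₀, piProj q.1 q.2.1 q.2.2 n₀) ∈ LEdges c n₀ ∨
      (piProj q.1 q.2.1 q.2.2 n₀, piProj p.1 p.2.1 p.2.2 n₀) ∈ LEdges c n₀)
    (halign : ∀ j, p.2.2 (n₀ - p.1 + j) = q.2.2 (n₀ - q.1 + j)) :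
    LcAdj c p q := by
  have h1 : p.1 ≤ n₀ := le_of_max_le_left hm.le
  have h2 : q.1 ≤ n₀ := le_of_max_le_right hm.le
  have key : ∀ d,
      (piProj p.1 p.2.1 p.2.2 (n₀ + d), piProj q.1 q.2.1 q.2.2 (n₀ + d)) ∈ LEdges c (n₀ + d) ∨
      (piProj q.1 q.2.1 q.2.2 (n₀ + d), piProj p.1 p.2.1 p.2.2 (n₀ + d)) ∈ LEdges c (n₀ + d) := by
    intro d
    induction d with
    | zero => exact hedge
    | succ d ih =>
        have e1 : n₀ + d - p.1 = n₀ - p.1 + d := by omega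
        have e2 : n₀ + d - q.1 = n₀ - q.1 + d := by omega
        have hb : (cond (p.2.2 (n₀ + d - p.1)) 1 0 : ℕ) = cond (q.2.2 (n₀ + d - q.1)) 1 0 := by
          rw [e1, e2, halign d]
        have hle : (cond (p.2.2 (n₀ + d - p.1)) 1 0 : ℕ) ≤ 1 := by
          cases p.2.2 (n₀ + d - p.1) <;> simp
        rw [show n₀ + (d + 1) = (n₀ + d) + 1 from rfl,
          piProj_succ _ _ _ (by omega : p.1 ≤ n₀ + d),
          piProj_succ _ _ _ (by omega : q.1 ≤ n₀ + d)]
        rcases ih with h | h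
        · exact Or.inl (by rw [← hb]; exact edge_propagate c h hle)
        · exact Or.inr (by rw [← hb]; exact edge_propagate c h (hb ▸ hle))
  intro n hn
  rw [hm] at hn
  obtain ⟨d, rfl⟩ := Nat.exists_eq_add_of_le hn
  exact key d

/-- the binary-string part of `pathEnd n 1`, as booleans -/
def e1b : ℕ → List Bool
  | 0 => []
  | t + 1 => List.replicate t false ++ [true]

@[simp] lemma e1b_length (n : ℕ) : (e1b n).length = n := by
  cases n <;> simp [e1b]

lemma pathEnd_one_eq (n : ℕ) :
    pathEnd n 1 = 0 :: (e1b n).map (fun b => cond b 1 0) := by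
  cases n <;> simp [pathEnd, e1b]

lemma catSeq_lt {t : List Bool} {x : ℕ → Bool} {j : ℕ} (h : j < t.length) :
    catSeq t x j = t.get ⟨j, h⟩ := by
  simp [catSeq, h]

lemma catSeq_ge (t : List Bool) (x : ℕ → Bool) (j : ℕ) :
    catSeq t x (t.length + j) = x j := by
  simp [catSeq]

lemma piProj_catSeq_base (t : List Bool) (x : ℕ → Bool) :
    piProj 0 0 (catSeq t x) t.length = 0 :: t.map (fun b => cond b 1 0) := by
  rw [piProj_eq_map]
  congr 1
  apply List.ext_getElem
  · simp
  · intro i h1 h2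
    have hi : i < t.length := by simpa using h2
    simp only [List.getElem_map, List.getElem_range]
    rw [catSeq_lt hi]
    simp

end Stmt14Aux

namespace Stmt14Aux
variable (c : ℕ → ℕ)

lemma ladj_spec {n : ℕ} {u v : List ℕ} (h : LAdj c n u v) :
    u ∈ LVerts c n ∧ v ∈ LVerts c n ∧
      (pos c n u + 1 = pos c n v ∨ pos c n v + 1 = pos c n u) := by
  rcases h with h | h
  · exact edges_spec c h
  · obtain ⟨h1, h2, h3⟩ := edges_spec c h
    exact ⟨h2, h1, h3.symm⟩

/-- a vertex has at most the two given neighbours -/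
lemma nbr_cases {p u v z : ℕ × ℕ × (ℕ → Bool)}
    (hu : LcAdj c p u) (hv : LcAdj c p v) (huv : u ≠ v) (hz : LcAdj c p z) :
    z = u ∨ z = v := by
  obtain ⟨N₀, hN₀⟩ := sep_of_ne huv
  obtain ⟨N, hN1, hN2, hN3, hN4, hN5⟩ : ∃ N, N₀ ≤ N ∧ p.1 ≤ N ∧ u.1 ≤ N ∧ v.1 ≤ N ∧ z.1 ≤ N :=
    ⟨N₀ + p.1 + u.1 + v.1 + z.1, by omega, by omega, by omega, by omega, by omega⟩
  have key : ∀ n, N ≤ n →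
      piProj z.1 z.2.1 z.2.2 n = piProj u.1 u.2.1 u.2.2 n ∨
      piProj z.1 z.2.1 z.2.2 n = piProj v.1 v.2.1 v.2.2 n := by
    intro n hn
    obtain ⟨hpM, huM, hdu⟩ := ladj_spec c (hu n (max_le (by omega) (by omega)))
    obtain ⟨-, hvM, hdv⟩ := ladj_spec c (hv n (max_le (by omega) (by omega)))
    obtain ⟨-, hzM, hdz⟩ := ladj_spec c (hz n (max_le (by omega) (by omega)))
    have hpuv : piProj u.1 u.2.1 u.2.2 n ≠ piProj v.1 v.2.1 v.2.2 n := hN₀ n (by omega)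
    have hne : pos c n (piProj u.1 u.2.1 u.2.2 n) ≠ pos c n (piProj v.1 v.2.1 v.2.2 n) :=
      fun h => hpuv (pos_inj c huM hvM h)
    have : pos c n (piProj z.1 z.2.1 z.2.2 n) = pos c n (piProj u.1 u.2.1 u.2.2 n) ∨
        pos c n (piProj z.1 z.2.1 z.2.2 n) = pos c n (piProj v.1 v.2.1 v.2.2 n) := by omega
    rcases this with h | h
    · exact Or.inl (pos_inj c hzM huM h)
    · exact Or.inr (pos_inj c hzM hvM h)
  by_cases hcof : ∀ M, ∃ n, M ≤ n ∧
      piProj z.1 z.2.1 z.2.2 n = piProj u.1 u.2.1 u.2.2 n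
  · exact Or.inl (eq_of_cofinal_proj hcof)
  · push_neg at hcof
    obtain ⟨M, hM⟩ := hcof
    refine Or.inr (eq_of_cofinal_proj fun M' => ⟨max M' (max M N), by omega, ?_⟩)
    rcases key (max M' (max M N)) (by omega) with h | h
    · exact absurd h (hM _ (by omega))
    · exact h

lemma no_cycle (m : ℕ) (w : ℕ → ℕ × ℕ × (ℕ → Bool)) (hm : 3 ≤ m)
    (hX : ∀ j, w j ∈ Xc c) (hw : IsWalk (LcAdj c) m w) (hclose : w m = w 0)
    (hinj : Function.Injective fun j : Fin m => w j.val) : False := by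
  have hne : ∀ a b, a < m → b < m → a ≠ b → w a ≠ w b := by
    intro a b ha hb hab h
    have := @hinj ⟨a, ha⟩ ⟨b, hb⟩ h
    exact hab (congrArg Fin.val this)
  have hsep : ∀ ab : ℕ × ℕ, ∃ N, ab.1 < m → ab.2 < m → ab.1 ≠ ab.2 → ∀ n, N ≤ n →
      piProj (w ab.1).1 (w ab.1).2.1 (w ab.1).2.2 n ≠
        piProj (w ab.2).1 (w ab.2).2.1 (w ab.2).2.2 n := by
    intro ⟨a, b⟩
    by_cases h : a < m ∧ b < m ∧ a ≠ b
    · obtain ⟨N, hN⟩ := sep_of_ne (hne a b h.1 h.2.1 h.2.2)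
      exact ⟨N, fun _ _ _ => hN⟩
    · exact ⟨0, fun h1 h2 h3 => absurd ⟨h1, h2, h3⟩ h⟩
  choose F hF using hsep
  set n := max ((Finset.range (m + 1)).sup fun j => (w j).1)
      (((Finset.range m) ×ˢ (Finset.range m)).sup F) with hn
  have hn1 : ∀ j, j ≤ m → (w j).1 ≤ n := by
    intro j hj
    exact le_trans (Finset.le_sup (f := fun j => (w j).1) (b := j)
      (Finset.mem_range.mpr (by omega))) (le_max_left _ _)
  have hn2 : ∀ a b, a < m → b < m → a ≠ b →
      piProj (w a).1 (w a).2.1 (w a).2.2 n ≠ piProj (w b).1 (w b).2.1 (w b).2.2 n := by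
    intro a b ha hb hab
    refine hF (a, b) ha hb hab n ?_
    refine le_trans (Finset.le_sup (f := F) (b := (a, b)) ?_) (le_max_right _ _)
    simp [Finset.mem_product, ha, hb]
  set f : ℕ → ℕ := fun j => pos c n (piProj (w j).1 (w j).2.1 (w j).2.2 n) with hf
  have hmemb : ∀ j, j ≤ m → piProj (w j).1 (w j).2.1 (w j).2.2 n ∈ LVerts c n :=
    fun j hj => piProj_mem c (hX j) n (hn1 j hj)
  have hstep : ∀ j, j < m → f j + 1 = f (j + 1) ∨ f (j + 1) + 1 = f j := by
    intro j hj
    have := ladj_spec c (hw j hj n (max_le (hn1 j (by omega)) (hn1 (j+1) (by omega))))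
    exact this.2.2
  have hfm : f m = f 0 := by rw [hf]; simp only [hclose]
  obtain ⟨js, hjs, hjmax⟩ := Finset.exists_max_image (Finset.range m) f
    ⟨0, Finset.mem_range.mpr (by omega)⟩
  simp only [Finset.mem_range] at hjs
  have hjmax' : ∀ i, i < m → f i ≤ f js := fun i hi => hjmax i (Finset.mem_range.mpr hi)
  obtain ⟨a, b, ham, hbm, hab, hfa, hfb⟩ :
      ∃ a b, a < m ∧ b < m ∧ a ≠ b ∧ f a + 1 = f js ∧ f b + 1 = f js := by
    by_cases h0 : js = 0
    · refine ⟨m - 1, 1, by omega, by omega, by omega, ?_, ?_⟩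
      · have h1 := hstep (m - 1) (by omega)
        rw [show m - 1 + 1 = m by omega, hfm] at h1
        have h2 := hjmax' (m - 1) (by omega)
        rw [h0] at h2 ⊢
        omega
      · have h1 := hstep 0 (by omega)
        simp only [Nat.zero_add] at h1
        have h2 := hjmax' 1 (by omega)
        rw [h0] at h2 ⊢
        omega
    · by_cases h1 : js + 1 = m
      · refine ⟨js - 1, 0, by omega, by omega, by omega, ?_, ?_⟩
        · have h2 := hstep (js - 1) (by omega)
          rw [show js - 1 + 1 = js by omega] at h2
          have h3 := hjmax' (js - 1) (by omega)
          omega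
        · have h2 := hstep js hjs
          rw [h1, hfm] at h2
          have h3 := hjmax' 0 (by omega)
          omega
      · refine ⟨js - 1, js + 1, by omega, by omega, by omega, ?_, ?_⟩
        · have h2 := hstep (js - 1) (by omega)
          rw [show js - 1 + 1 = js by omega] at h2
          have h3 := hjmax' (js - 1) (by omega)
          omega
        · have h2 := hstep js hjs
          have h3 := hjmax' (js + 1) (by omega)
          omega
  exact hn2 a b ham hbm hab
    (pos_inj c (hmemb a (by omega)) (hmemb b (by omega)) (show f a = f b by omega))

end Stmt14Aux

namespace Stmt14Aux
variable (c : ℕ → ℕ)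

lemma edge_cross0 (n : ℕ) : (pathEnd n 1 ++ [0], ([0] : List ℕ)) ∈ LEdges c (n + 1) :=
  Or.inl (Or.inr (Or.inl rfl))

lemma edge_cross1 (n : ℕ) : (([c n] : List ℕ), pathEnd n 1 ++ [1]) ∈ LEdges c (n + 1) :=
  Or.inl (Or.inr (Or.inr rfl))

lemma edge_mid (n : ℕ) {j : ℕ} (hj : j < c n) :
    (([j] : List ℕ), ([j + 1] : List ℕ)) ∈ LEdges c (n + 1) :=
  Or.inr ⟨j, hj, rfl⟩

lemma adj_step {m k : ℕ} {x : ℕ → Bool} (hm : 1 ≤ m) (hk : k < c (m - 1)) :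
    LcAdj c (m, k, x) (m, k + 1, x) := by
  apply lcAdj_of_base c (n₀ := m) (by simp)
  · left
    rw [piProj_base, piProj_base]
    have : m = (m - 1) + 1 := by omega
    rw [this]
    exact edge_mid c (m - 1) hk
  · intro j; rfl

lemma adj_cross0 {m : ℕ} {x : ℕ → Bool} (hm : 1 ≤ m) :
    LcAdj c (m, 0, x) (0, 0, catSeq (e1b (m - 1) ++ [false]) x) := by
  have hl : (e1b (m - 1) ++ [false]).length = m := by simp; omega
  apply lcAdj_of_base c (n₀ := m) (by simp)
  · right
    rw [piProj_base, show (piProj 0 0 (catSeq (e1b (m - 1) ++ [false]) x) m) =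
        piProj 0 0 (catSeq (e1b (m - 1) ++ [false]) x) (e1b (m - 1) ++ [false]).length
        from by rw [hl], piProj_catSeq_base]
    have : (0 : ℕ) :: (e1b (m - 1) ++ [false]).map (fun b => cond b 1 0) =
        pathEnd (m - 1) 1 ++ [0] := by
      rw [pathEnd_one_eq]
      simp
    rw [this, show m = (m - 1) + 1 by omega]
    exact edge_cross0 c (m - 1)
  · intro j
    show x (m - m + j) = catSeq (e1b (m - 1) ++ [false]) x (m - 0 + j)
    rw [show m - 0 + j = (e1b (m - 1) ++ [false]).length + j from by rw [hl]; omega, catSeq_ge]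
    congr 1
    omega

lemma adj_cross1 {m : ℕ} {x : ℕ → Bool} (hm : 1 ≤ m) :
    LcAdj c (m, c (m - 1), x) (0, 0, catSeq (e1b (m - 1) ++ [true]) x) := by
  have hl : (e1b (m - 1) ++ [true]).length = m := by simp; omega
  apply lcAdj_of_base c (n₀ := m) (by simp)
  · left
    rw [piProj_base, show (piProj 0 0 (catSeq (e1b (m - 1) ++ [true]) x) m) =
        piProj 0 0 (catSeq (e1b (m - 1) ++ [true]) x) (e1b (m - 1) ++ [true]).length
        from by rw [hl], piProj_catSeq_base]
    have : (0 : ℕ) :: (e1b (m - 1) ++ [true]).map (fun b => cond b 1 0) =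
        pathEnd (m - 1) 1 ++ [1] := by
      rw [pathEnd_one_eq]
      simp
    rw [this, show m = (m - 1) + 1 by omega]
    exact edge_cross1 c (m - 1)
  · intro j
    show x (m - m + j) = catSeq (e1b (m - 1) ++ [true]) x (m - 0 + j)
    rw [show m - 0 + j = (e1b (m - 1) ++ [true]).length + j from by rw [hl]; omega, catSeq_ge]
    congr 1
    omega

lemma piProj_one (x : ℕ → Bool) : piProj 0 0 x 1 = [0, cond (x 0) 1 0] := by
  simp [piProj_eq_map, List.range_succ]

lemma adj_zero_u (x : ℕ → Bool) :
    LcAdj c (0, 0, x) (1, if x 0 then c 0 else 0, fun j => x (j + 1)) := by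
  apply lcAdj_of_base c (n₀ := 1) (by simp)
  · rw [piProj_base, piProj_one]
    cases hx0 : x 0
    · left
      simp only [hx0, if_neg Bool.false_ne_true]
      exact edge_cross0 c 0
    · right
      simp only [hx0, if_pos rfl]
      exact edge_cross1 c 0
  · intro j
    show x (1 - 0 + j) = x ((1 - 1 + j) + 1)
    congr 1
    omega

lemma adj_zero_v {x : ℕ → Bool} {r : ℕ} (hr : x r = true) (hrmin : ∀ i, i < r → x i = false) :
    LcAdj c (0, 0, x)
      (r + 2, if x (r + 1) then c (r + 1) else 0, fun j => x (j + r + 2)) := by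
  have hproj : piProj 0 0 x (r + 2) = pathEnd (r + 1) 1 ++ [cond (x (r + 1)) 1 0] := by
    rw [piProj_eq_map, pathEnd_one_eq]
    have h1 : List.range (r + 2 - 0) = (List.range r ++ [r]) ++ [r + 1] := by
      simp only [Nat.sub_zero]
      rw [List.range_succ, List.range_succ]
    rw [h1]
    have h2 : (List.range r).map (fun j => (cond (x j) 1 0 : ℕ)) = List.replicate r 0 := by
      apply List.ext_getElem
      · simp
      · intro i hi1 hi2
        simp only [List.getElem_map, List.getElem_range, List.getElem_replicate]
        rw [hrmin i (by simpa using hi1)]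
        rfl
    simp only [List.map_append, h2, hr, List.map_cons, List.map_nil, e1b]
    simp [List.map_replicate]
  apply lcAdj_of_base c (n₀ := r + 2) (by simp)
  · rw [piProj_base, hproj]
    cases hx1 : x (r + 1)
    · left
      simp only [if_neg Bool.false_ne_true]
      exact edge_cross0 c (r + 1)
    · right
      simp only [if_pos rfl]
      exact edge_cross1 c (r + 1)
  · intro j
    show x (r + 2 - 0 + j) = x ((r + 2 - (r + 2) + j) + r + 2)
    congr 1
    omega

end Stmt14Aux

namespace Stmt14Aux
variable (c : ℕ → ℕ)

lemma lcAdj_symm {p q : ℕ × ℕ × (ℕ → Bool)} (h : LcAdj c p q) : LcAdj c q p := by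
  intro n hn
  rw [max_comm] at hn
  exact Or.symm (h n hn)

lemma nbr_set_eq {p u v : ℕ × ℕ × (ℕ → Bool)} (hXu : u ∈ Xc c) (hXv : v ∈ Xc c)
    (hu : LcAdj c p u) (hv : LcAdj c p v) (huv : u ≠ v) :
    {z | z ∈ Xc c ∧ LcAdj c p z} = {u, v} := by
  ext z
  simp only [Set.mem_setOf_eq, Set.mem_insert_iff, Set.mem_singleton_iff]
  constructor
  · rintro ⟨_, hz⟩
    exact nbr_cases c hu hv huv hz
  · rintro (rfl | rfl)
    exacts [⟨hXu, hu⟩, ⟨hXv, hv⟩]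

lemma piProj_p0 (n : ℕ) : piProj 0 0 (fun _ => false) n = pathEnd n 0 := by
  rw [piProj_eq_map]
  cases n with
  | zero => rfl
  | succ t =>
      simp only [pathEnd, Nat.sub_zero]
      congr 1
      rw [← List.replicate_succ']
      apply List.ext_getElem
      · simp
      · intro i h1 h2
        simp

lemma adj_p0_u0 : LcAdj c ((0, 0, fun _ => false) : ℕ × ℕ × (ℕ → Bool))
    ((1, 0, fun _ => false) : ℕ × ℕ × (ℕ → Bool)) := by
  have := adj_zero_u c (fun _ => false)
  simpa using this

lemma p0_unique {z : ℕ × ℕ × (ℕ → Bool)}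
    (hz : LcAdj c ((0, 0, fun _ => false) : ℕ × ℕ × (ℕ → Bool)) z) :
    z = ((1, 0, fun _ => false) : ℕ × ℕ × (ℕ → Bool)) := by
  have hu0 := adj_p0_u0 c
  apply eq_of_cofinal_proj
  intro M
  refine ⟨max M (max 1 z.1), by omega, ?_⟩
  show piProj z.1 z.2.1 z.2.2 (max M (max 1 z.1)) =
    piProj 1 0 (fun _ => false) (max M (max 1 z.1))
  set n := max M (max 1 z.1) with hn
  have hp0 : pos c n (piProj 0 0 (fun _ => false) n) = 0 := by
    rw [piProj_p0, pos_pathEnd_zero]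
  obtain ⟨hpM, hzM, hdz⟩ := ladj_spec c (hz n (by dsimp only; omega))
  obtain ⟨-, huM, hdu⟩ := ladj_spec c (hu0 n (by dsimp only; omega))
  dsimp only at hpM hzM hdz huM hdu
  rw [hp0] at hdz hdu
  exact pos_inj c hzM huM (by omega)

end Stmt14Aux

namespace Stmt14Aux
variable (c : ℕ → ℕ)

lemma mem_Xc_iff (m k : ℕ) (x : ℕ → Bool) :
    ((m, k, x) : ℕ × ℕ × (ℕ → Bool)) ∈ Xc c ↔ (m = 0 ∧ k = 0) ∨ (1 ≤ m ∧ k ≤ c (m - 1)) :=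
  Iff.rfl

lemma catSeq_ne (t' : List Bool) (x : ℕ → Bool) :
    catSeq (t' ++ [false]) x ≠ catSeq (t' ++ [true]) x := by
  intro h
  have h2 := congrFun h t'.length
  rw [catSeq_lt (by simp), catSeq_lt (by simp)] at h2
  simp only [List.get_eq_getElem, List.getElem_concat_length] at h2
  exact Bool.false_ne_true h2

end Stmt14Aux

open Stmt14Aux in
theorem stmt14_main (c : ℕ → ℕ) :
    (∀ (m : ℕ) (w : ℕ → ℕ × ℕ × (ℕ → Bool)), 3 ≤ m →
      (∀ j, w j ∈ Xc c) → IsWalk (LcAdj c) m w → w m = w 0 →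
      ¬ Function.Injective (fun j : Fin m => w j.val)) ∧
    (∃! u, u ∈ Xc c ∧ LcAdj c ((0, 0, fun _ => false) : ℕ × ℕ × (ℕ → Bool)) u) ∧
    (∀ p ∈ Xc c, p ≠ ((0, 0, fun _ => false) : ℕ × ℕ × (ℕ → Bool)) →
      ∃ u v, u ≠ v ∧ {z | z ∈ Xc c ∧ LcAdj c p z} = {u, v}) := by
  refine ⟨?_, ?_, ?_⟩
  · intro m w hm hX hw hcl hinj
    exact no_cycle c m w hm hX hw hcl hinj
  · refine ⟨(1, 0, fun _ => false), ⟨?_, adj_p0_u0 c⟩, ?_⟩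
    · exact Or.inr ⟨le_rfl, Nat.zero_le _⟩
    · rintro z ⟨-, hz⟩
      exact p0_unique c hz
  · rintro ⟨m, k, x⟩ hp hne
    match m with
    | 0 =>
        have hk : k = 0 := by
          rw [mem_Xc_iff] at hp
          rcases hp with ⟨-, h⟩ | ⟨h, -⟩
          · exact h
          · omega
        subst hk
        have hxne : x ≠ fun _ => false := fun h => hne (by rw [h])
        have hex : ∃ j, x j = true := by
          by_contra h
          push_neg at h
          exact hxne (funext fun j => by have := h j; revert this; cases x j <;> simp)
        have hr : x (Nat.find hex) = true := Nat.find_spec hex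
        have hrmin : ∀ i, i < Nat.find hex → x i = false := fun i hi => by
          have := Nat.find_min hex hi; revert this; cases x i <;> simp
        refine ⟨(1, if x 0 then c 0 else 0, fun j => x (j + 1)),
          (Nat.find hex + 2, if x (Nat.find hex + 1) then c (Nat.find hex + 1) else 0,
            fun j => x (j + Nat.find hex + 2)), ?_, ?_⟩
        · intro h
          have := congrArg Prod.fst h
          simp at this
        · refine nbr_set_eq c ?_ ?_ (adj_zero_u c x) (adj_zero_v c hr hrmin) ?_
          · refine Or.inr ⟨le_rfl, ?_⟩
            have hc1 : c (1 - 1) = c 0 := by norm_num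
            dsimp only
            rw [hc1]
            split <;> omega
          · refine Or.inr ⟨by dsimp only; omega, ?_⟩
            have hc2 : c (Nat.find hex + 2 - 1) = c (Nat.find hex + 1) := by congr 1
            dsimp only
            rw [hc2]
            split <;> omega
          · intro h
            have := congrArg Prod.fst h
            simp at this
    | t + 1 =>
        have hk : k ≤ c t := by
          rw [mem_Xc_iff] at hp
          rcases hp with ⟨h, -⟩ | ⟨-, h⟩
          · omega
          · exact h
        have hct : c (t + 1 - 1) = c t := by norm_num
        by_cases hk0 : k = 0 <;> by_cases hkc : k = c t
        · -- k = 0 = c t : two crossing neighbours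
          subst hk0
          refine ⟨(0, 0, catSeq (e1b t ++ [false]) x), (0, 0, catSeq (e1b t ++ [true]) x),
            ?_, ?_⟩
          · intro h
            rw [Prod.ext_iff, Prod.ext_iff] at h
            exact catSeq_ne (e1b t) x h.2.2
          · refine nbr_set_eq c (Or.inl ⟨rfl, rfl⟩) (Or.inl ⟨rfl, rfl⟩)
              (adj_cross0 c (by omega)) ?_ ?_
            · have := adj_cross1 c (m := t + 1) (x := x) (by omega)
              rw [show c ((t+1) - 1) = 0 from hkc.symm] at this
              exact this
            · intro h
              rw [Prod.ext_iff, Prod.ext_iff] at h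
              exact catSeq_ne (e1b t) x h.2.2
        · -- k = 0 < c t
          subst hk0
          refine ⟨(0, 0, catSeq (e1b t ++ [false]) x), (t + 1, 1, x), ?_, ?_⟩
          · intro h
            have := congrArg Prod.fst h
            simp at this
          · refine nbr_set_eq c (Or.inl ⟨rfl, rfl⟩) (Or.inr ⟨by omega, by (try dsimp only); rw [hct]; omega⟩)
              (adj_cross0 c (by omega)) (adj_step c (by omega) (by (try dsimp only); rw [hct]; omega)) ?_
            intro h
            have := congrArg Prod.fst h
            simp at this
        · -- 0 < k = c t
          refine ⟨(t + 1, k - 1, x), (0, 0, catSeq (e1b t ++ [true]) x), ?_, ?_⟩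
          · intro h
            have := congrArg Prod.fst h
            simp at this
          · refine nbr_set_eq c (Or.inr ⟨by omega, by (try dsimp only); rw [hct]; omega⟩) (Or.inl ⟨rfl, rfl⟩)
              ?_ ?_ ?_
            · have := adj_step c (m := t + 1) (k := k - 1) (x := x) (by omega) (by (try dsimp only); rw [hct]; omega)
              rw [show k - 1 + 1 = k by omega] at this
              exact lcAdj_symm c this
            · have := adj_cross1 c (m := t + 1) (x := x) (by omega)
              rw [show c ((t+1) - 1) = k from hkc.symm] at this
              exact this
            · intro h
              have := congrArg Prod.fst h
              simp at this
        · -- 0 < k < c t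
          refine ⟨(t + 1, k - 1, x), (t + 1, k + 1, x), ?_, ?_⟩
          · intro h
            have := congrArg (fun q : ℕ × ℕ × (ℕ → Bool) => q.2.1) h
            simp only at this
            omega
          · refine nbr_set_eq c (Or.inr ⟨by omega, by (try dsimp only); rw [hct]; omega⟩)
              (Or.inr ⟨by omega, by (try dsimp only); rw [hct]; omega⟩) ?_
              (adj_step c (by omega) (by (try dsimp only); rw [hct]; omega)) ?_
            · have := adj_step c (m := t + 1) (k := k - 1) (x := x) (by omega) (by (try dsimp only); rw [hct]; omega)
              rw [show k - 1 + 1 = k by omega] at this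
              exact lcAdj_symm c this
            · intro h
              have := congrArg (fun q : ℕ × ℕ × (ℕ → Bool) => q.2.1) h
              simp only at this
              omega

/-- `𝕃_c` has no cycles, the vertex `(0,0,0^ω)` has degree 1, and every
other vertex of `X_c` has degree 2. -/
theorem stmt14 (c : ℕ → ℕ) :
    (∀ (m : ℕ) (w : ℕ → ℕ × ℕ × (ℕ → Bool)), 3 ≤ m →
      (∀ j, w j ∈ Xc c) → IsWalk (LcAdj c) m w → w m = w 0 →
      ¬ Function.Injective (fun j : Fin m => w j.val)) ∧
    (∃! u, u ∈ Xc c ∧ LcAdj c ((0, 0, fun _ => false) : ℕ × ℕ × (ℕ → Bool)) u) ∧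
    (∀ p ∈ Xc c, p ≠ ((0, 0, fun _ => false) : ℕ × ℕ × (ℕ → Bool)) →
      ∃ u v, u ≠ v ∧ {z | z ∈ Xc c ∧ LcAdj c p z} = {u, v}) := by
  exact stmt14_main c
end
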